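/- arXiv:2004.00928 — 5 statements merged into one kernel-verified Lean document; each statement's English description precedes it below -/
import Mathlib

section
/- Let f be a continuous map of a compact metric space M preserving an ergodic Borel probability measure μ. Suppose D ⊆ M is a closed set with μ(D) > 0. Let μ_D be the normalized restriction μ_D(B) = μ(B ∩ D)/μ(D), and let E = {x ∈ supp(μ_D) : the closure of 𝒪(x) ∩ supp(μ_D) equals supp(μ_D)}, where 𝒪(x) = {f^n(x) : n ≥ 0} is the forward orbit of x. Then μ(E) = μ(supp(μ_D)) = μ(D). -/
/-! The support `S` of `μ_D` is a closed subset of `D` of full measure in `D`, so `μ(S) = μ(D)`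
and every open set meeting `S` meets it in positive `μ`-measure. By ergodicity, `μ`-a.e. forward
orbit enters each set of positive measure; intersecting over a countable basis, `μ`-a.e. orbit
enters every basic open set meeting `S` at a point of `S`, i.e. its trace on `S` is dense in `S`. -/

open MeasureTheory Filter Topology

/-- The topological support of a measure: the set of points all of whose open
neighborhoods have positive measure. -/
def measSupp {M : Type*} [TopologicalSpace M] [MeasurableSpace M] (ν : Measure M) : Set M :=
  {x : M | ∀ U : Set M, IsOpen U → x ∈ U → 0 < ν U}

/-- The forward orbit of a point. -/
def fwdOrbit {M : Type*} (f : M → M) (x : M) : Set M :=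
  {y : M | ∃ n : ℕ, f^[n] x = y}

open TopologicalSpace

lemma measSupp_eq_support {M : Type*} [TopologicalSpace M] [MeasurableSpace M]
    (ν : Measure M) : measSupp ν = ν.support := by
  rw [Measure.support_eq_forall_isOpen]
  ext x
  exact forall_congr' fun U => Imp.swap

namespace MeasureTheory.Measure

variable {X : Type*} [TopologicalSpace X] [MeasurableSpace X]

lemma support_smul {ν : Measure X} {c : ENNReal} (hc : c ≠ 0) : (c • ν).support = ν.support :=
  subset_antisymm smul_absolutelyContinuous.support_mono
    (absolutelyContinuous_smul hc).support_mono

lemma restrict_support_restrict_of_isClosed [OpensMeasurableSpace X]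
    [HereditarilyLindelofSpace X] {μ : Measure X} {D : Set X} (hD : IsClosed D) :
    μ.restrict (μ.restrict D).support = μ.restrict D := by
  have hSD : (μ.restrict D).support ⊆ D :=
    support_restrict_subset.trans (Set.inter_subset_left.trans hD.closure_subset)
  calc μ.restrict (μ.restrict D).support
      = μ.restrict ((μ.restrict D).support ∩ D) := by rw [Set.inter_eq_left.mpr hSD]
    _ = (μ.restrict D).restrict (μ.restrict D).support :=
        (restrict_restrict isClosed_support.measurableSet).symm
    _ = μ.restrict D := restrict_eq_self_of_ae_mem support_mem_ae

end MeasureTheory.Measure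

namespace Ergodic

variable {α : Type*} [MeasurableSpace α] {f : α → α} {μ : Measure α} [IsFiniteMeasure μ]

lemma ae_exists_iterate_mem (hf : Ergodic f μ) {s : Set α} (hs : MeasurableSet s)
    (hμs : μ s ≠ 0) : ∀ᵐ x ∂μ, ∃ n, f^[n] x ∈ s := by
  set W := ⋃ n, f^[n] ⁻¹' s
  have hW : MeasurableSet W := .iUnion fun n => hs.preimage (hf.measurable.iterate n)
  have hfW : f ⁻¹' W ⊆ W := by
    simp only [W, Set.preimage_iUnion, ← Set.preimage_comp, ← Function.iterate_succ]
    exact Set.iUnion_subset fun n => Set.subset_iUnion (fun n => f^[n] ⁻¹' s) (n + 1)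
  rcases hf.ae_empty_or_univ_of_preimage_ae_le hW.nullMeasurableSet hfW.eventuallyLE with
    hempty | huniv
  · have hsW : s ⊆ W := Set.subset_iUnion (fun n => f^[n] ⁻¹' s) 0
    exact absurd (measure_mono_null hsW (by rw [measure_congr hempty, measure_empty])) hμs
  · filter_upwards [huniv.mem_iff] with x hx
    exact Set.mem_iUnion.mp (hx.mpr trivial)

lemma ae_support_restrict_subset_closure_fwdOrbit [TopologicalSpace α]
    [SecondCountableTopology α] [OpensMeasurableSpace α] (hf : Ergodic f μ) {s : Set α}
    (hs : MeasurableSet s) : ∀ᵐ x ∂μ, (μ.restrict s).support ⊆ closure (fwdOrbit f x ∩ s) := by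
  have hvisit : ∀ᵐ x ∂μ, ∀ U ∈ countableBasis α, μ (U ∩ s) ≠ 0 → ∃ n, f^[n] x ∈ U ∩ s := by
    refine (ae_ball_iff (countable_countableBasis α)).mpr fun U hU => ?_
    by_cases hμU : μ (U ∩ s) = 0
    · exact Eventually.of_forall fun _ h => absurd hμU h
    · filter_upwards [hf.ae_exists_iterate_mem
        ((isOpen_of_mem_countableBasis hU).measurableSet.inter hs) hμU] with x hx _ using hx
  filter_upwards [hvisit] with x hx y hy
  rw [(isBasis_countableBasis α).mem_closure_iff]
  intro U hU hyU
  have hUopen := isOpen_of_mem_countableBasis hU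
  have hμU : μ (U ∩ s) ≠ 0 := by
    rw [Measure.support_eq_forall_isOpen] at hy
    rw [← Measure.restrict_apply hUopen.measurableSet]
    exact (hy U hyU hUopen).ne'
  obtain ⟨n, hnU, hns⟩ := hx U hU hμU
  exact ⟨f^[n] x, hnU, ⟨n, rfl⟩, hns⟩

end Ergodic

theorem stmt0_general {M : Type*} [MetricSpace M] [CompactSpace M] [MeasurableSpace M] [BorelSpace M]
    (f : M → M)
    (μ : Measure M) [IsProbabilityMeasure μ] (herg : Ergodic f μ)
    (D : Set M) (hDclosed : IsClosed D)
    (μD : Measure M) (hμD : μD = (μ D)⁻¹ • μ.restrict D)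
    (E : Set M)
    (hE : E = {x ∈ measSupp μD | closure (fwdOrbit f x ∩ measSupp μD) = measSupp μD}) :
    μ E = μ (measSupp μD) ∧ μ (measSupp μD) = μ D := by
  have hS : measSupp μD = (μ.restrict D).support := by
    rw [hμD, measSupp_eq_support,
      Measure.support_smul (ENNReal.inv_ne_zero.mpr (measure_ne_top μ D))]
  have hrestrict : μ.restrict (measSupp μD) = μ.restrict D :=
    hS ▸ Measure.restrict_support_restrict_of_isClosed hDclosed
  have hSclosed : IsClosed (measSupp μD) := hS ▸ Measure.isClosed_support
  have hμS : μ (measSupp μD) = μ D := by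
    simpa only [Measure.restrict_apply_univ] using congrArg (· Set.univ) hrestrict
  refine ⟨le_antisymm (measure_mono (hE ▸ Set.sep_subset _ _)) (measure_mono_ae ?_), hμS⟩
  filter_upwards [herg.ae_support_restrict_subset_closure_fwdOrbit hSclosed.measurableSet]
    with x hx hxS
  rw [hE]
  refine ⟨hxS, subset_antisymm (closure_minimal Set.inter_subset_right hSclosed) ?_⟩
  rwa [hrestrict, ← hS] at hx

/-- Let `f` be a continuous map of a compact metric space `M` preserving an
ergodic Borel probability measure `μ`. Suppose `D ⊆ M` is a closed set with `μ(D) > 0`.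
Let `μ_D` be the normalized restriction, and let
`E = {x ∈ supp(μ_D) : closure (𝒪(x) ∩ supp(μ_D)) = supp(μ_D)}`.
Then `μ(E) = μ(supp(μ_D)) = μ(D)`. -/
theorem stmt0 {M : Type*} [MetricSpace M] [CompactSpace M] [MeasurableSpace M] [BorelSpace M]
    (f : M → M) (hf : Continuous f)
    (μ : Measure M) [IsProbabilityMeasure μ] (herg : Ergodic f μ)
    (D : Set M) (hDclosed : IsClosed D) (hDpos : 0 < μ D)
    (μD : Measure M) (hμD : μD = (μ D)⁻¹ • μ.restrict D)
    (E : Set M)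
    (hE : E = {x ∈ measSupp μD | closure (fwdOrbit f x ∩ measSupp μD) = measSupp μD}) :
    μ E = μ (measSupp μD) ∧ μ (measSupp μD) = μ D :=
  stmt0_general f μ herg D hDclosed μD hμD E hE
end

section
/- Let M be a compact metric space, f: M → M a continuous map preserving an ergodic Borel probability measure μ, X a real Banach space, and A: M → GL(X) continuous with respect to d. If there exists a μ-continuous map C: M → GL(X) such that A(x) = C(f x) ∘ C(x)⁻¹ for μ-a.e. x ∈ M, then λ₊(𝒜,μ) = λ₋(𝒜,μ) = 0. -/
/-!
Almost everywhere `𝒜ₓⁿ = C(fⁿx) C(x)⁻¹`. A finite union `K` of the compact sets `Kₙ` has measure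
close to `1` and `C '' K` is compact, so `C` and `C⁻¹` are bounded on `K` by some `R`; by
invariance `K ∩ f⁻ⁿK` also has measure close to `1`, and there `‖𝒜ₓⁿ‖, ‖(𝒜ₓⁿ)⁻¹‖ ≤ R²`
independently of `n`. Everywhere else they are at most `cⁿ`, where `c` bounds `A` and `A⁻¹` on the
compact space `M`. Since `‖e‖ ‖e⁻¹‖ ≥ 1`, these upper bounds control `|log ‖𝒜ₓⁿ‖|`, so
`(1/n) ∫ |log ‖𝒜ₓⁿ‖| dμ ≤ 2 log R / n + 2 μ(Kᶜ) log c`, which is small for large `n`.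
-/

open MeasureTheory Filter Topology

section GLspace

variable {X : Type*} [NormedAddCommGroup X] [NormedSpace ℝ X]

/-- The metric `d(A,B) = ‖A − B‖ + ‖A⁻¹ − B⁻¹‖` on the group `GL(X)` of invertible bounded
linear operators on `X` (formalized as continuous linear equivalences `X ≃L[ℝ] X`). -/
noncomputable instance glMetricSpace : MetricSpace (X ≃L[ℝ] X) where
  dist A B := ‖(A : X →L[ℝ] X) - (B : X →L[ℝ] X)‖ +
    ‖(A.symm : X →L[ℝ] X) - (B.symm : X →L[ℝ] X)‖
  dist_self A := by simp
  dist_comm A B := by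
    simp only [norm_sub_rev ((A : X →L[ℝ] X)), norm_sub_rev ((A.symm : X →L[ℝ] X))]
  dist_triangle A B C := by
    have h1 : ‖(A : X →L[ℝ] X) - (C : X →L[ℝ] X)‖ ≤
        ‖(A : X →L[ℝ] X) - (B : X →L[ℝ] X)‖ + ‖(B : X →L[ℝ] X) - (C : X →L[ℝ] X)‖ :=
      norm_sub_le_norm_sub_add_norm_sub _ _ _
    have h2 : ‖(A.symm : X →L[ℝ] X) - (C.symm : X →L[ℝ] X)‖ ≤
        ‖(A.symm : X →L[ℝ] X) - (B.symm : X →L[ℝ] X)‖ +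
        ‖(B.symm : X →L[ℝ] X) - (C.symm : X →L[ℝ] X)‖ :=
      norm_sub_le_norm_sub_add_norm_sub _ _ _
    try dsimp only
    linarith
  eq_of_dist_eq_zero := by
    intro A B h
    try dsimp only at h
    have h1 : ‖(A : X →L[ℝ] X) - (B : X →L[ℝ] X)‖ = 0 := by
      have := norm_nonneg ((A : X →L[ℝ] X) - (B : X →L[ℝ] X))
      have := norm_nonneg ((A.symm : X →L[ℝ] X) - (B.symm : X →L[ℝ] X))
      linarith
    have h2 : (A : X →L[ℝ] X) = (B : X →L[ℝ] X) := by
      rwa [norm_eq_zero, sub_eq_zero] at h1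
    exact ContinuousLinearEquiv.coe_injective h2

/-- The Borel σ-algebra of `(GL(X), d)`. -/
noncomputable instance : MeasurableSpace (X ≃L[ℝ] X) := borel _
instance : BorelSpace (X ≃L[ℝ] X) := ⟨rfl⟩

end GLspace

variable {M : Type*} {X : Type*} [NormedAddCommGroup X] [NormedSpace ℝ X]

/-- The cocycle generated by `A` over `f`: `𝒜ₓⁿ = A(f^{n-1}x) ∘ ⋯ ∘ A(fx) ∘ A(x)` for `n ≥ 1`
and `𝒜ₓ⁰ = Id`. -/
def coc (f : M → M) (A : M → (X ≃L[ℝ] X)) : ℕ → M → (X ≃L[ℝ] X)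
  | 0, _ => 1
  | n + 1, x => coc f A n (f x) * A x

/-- `C : M → G` is `μ`-continuous: there are compact sets `Kₙ ⊆ M` with `μ(⋃ₙ Kₙ) = 1`
such that the restriction of `C` to each `Kₙ` is continuous. -/
def MuContinuous [TopologicalSpace M] [MeasurableSpace M] (μ : Measure M) {G : Type*}
    [TopologicalSpace G] (C : M → G) : Prop :=
  ∃ K : ℕ → Set M, (∀ n, IsCompact (K n)) ∧ μ (⋃ n, K n) = 1 ∧ ∀ n, ContinuousOn C (K n)

open Set

lemma dist_eq_dist_add_dist_inv (a b : X ≃L[ℝ] X) :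
    dist a b = dist (a : X →L[ℝ] X) b + dist (↑(a⁻¹) : X →L[ℝ] X) ↑(b⁻¹) := by
  simp only [dist_eq_norm]
  rfl

lemma continuous_toContinuousLinearMap :
    Continuous (ContinuousLinearEquiv.toContinuousLinearMap : (X ≃L[ℝ] X) → X →L[ℝ] X) :=
  LipschitzWith.continuous (K := 1) <| LipschitzWith.mk_one fun a b => by
    rw [dist_eq_dist_add_dist_inv]
    exact le_add_of_nonneg_right dist_nonneg

lemma isometry_inv_gl : Isometry (fun e : X ≃L[ℝ] X => e⁻¹) :=
  Isometry.of_dist_eq fun a b => by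
    rw [dist_eq_dist_add_dist_inv, dist_eq_dist_add_dist_inv a, inv_inv, inv_inv, add_comm]

lemma continuous_of_continuous_toContinuousLinearMap {T : Type*} [TopologicalSpace T]
    {g : T → X ≃L[ℝ] X} (hg : Continuous fun t => (g t : X →L[ℝ] X))
    (hg' : Continuous fun t => (↑((g t)⁻¹) : X →L[ℝ] X)) : Continuous g := by
  refine continuous_iff_continuousAt.2 fun t => tendsto_iff_dist_tendsto_zero.2 ?_
  simp only [dist_eq_dist_add_dist_inv]
  simpa using (tendsto_iff_dist_tendsto_zero.1 (hg.tendsto t)).add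
    (tendsto_iff_dist_tendsto_zero.1 (hg'.tendsto t))

instance : IsTopologicalGroup (X ≃L[ℝ] X) where
  continuous_mul := by
    have hcoe := continuous_toContinuousLinearMap (X := X)
    have hinv := hcoe.comp (isometry_inv_gl (X := X)).continuous
    refine continuous_of_continuous_toContinuousLinearMap ?_ ?_
    · simp only [ContinuousLinearEquiv.toContinuousLinearMap_mul]
      exact (hcoe.comp continuous_fst).mul (hcoe.comp continuous_snd)
    · simp only [mul_inv_rev, ContinuousLinearEquiv.toContinuousLinearMap_mul]
      exact (hinv.comp continuous_snd).mul (hinv.comp continuous_fst)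
  continuous_inv := isometry_inv_gl.continuous

lemma IsCompact.exists_norm_le_and_norm_inv_le {S : Set (X ≃L[ℝ] X)} (hS : IsCompact S) :
    ∃ R, 1 ≤ R ∧ ∀ e ∈ S, ‖(e : X →L[ℝ] X)‖ ≤ R ∧ ‖(↑(e⁻¹) : X →L[ℝ] X)‖ ≤ R := by
  obtain ⟨R₁, hR₁⟩ := hS.exists_bound_of_continuousOn continuous_toContinuousLinearMap.continuousOn
  obtain ⟨R₂, hR₂⟩ := hS.exists_bound_of_continuousOn
    (continuous_toContinuousLinearMap.comp continuous_inv).continuousOn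
  exact ⟨max 1 (max R₁ R₂), le_max_left _ _, fun e he =>
    ⟨(hR₁ e he).trans (by simp), (hR₂ e he).trans (by simp)⟩⟩

lemma abs_log_norm_le {e : X ≃L[ℝ] X} {a : ℝ} (ha : 1 ≤ a) (he : ‖(e : X →L[ℝ] X)‖ ≤ a)
    (he' : ‖(↑(e⁻¹) : X →L[ℝ] X)‖ ≤ a) : |Real.log ‖(e : X →L[ℝ] X)‖| ≤ Real.log a := by
  rcases subsingleton_or_nontrivial X with hX | hX
  · simpa [Subsingleton.elim (e : X →L[ℝ] X) 0] using Real.log_nonneg ha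
  have hpos : 0 < ‖(e : X →L[ℝ] X)‖ := e.norm_pos
  have hinv_le : a⁻¹ ≤ ‖(e : X →L[ℝ] X)‖ := by
    rw [inv_le_iff_one_le_mul₀ (by linarith)]
    calc 1 ≤ ‖(e : X →L[ℝ] X)‖ * ‖(↑(e⁻¹) : X →L[ℝ] X)‖ := e.one_le_norm_mul_norm_symm
      _ ≤ ‖(e : X →L[ℝ] X)‖ * a := by gcongr
  rw [abs_le, ← Real.log_inv]
  exact ⟨Real.log_le_log (by positivity) hinv_le, Real.log_le_log hpos he⟩

section Cocycle

variable {f : M → M} {A C : M → X ≃L[ℝ] X}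

lemma norm_coc_le_pow {c : ℝ}
    (hA : ∀ x, ‖(A x : X →L[ℝ] X)‖ ≤ c ∧ ‖(↑(A x)⁻¹ : X →L[ℝ] X)‖ ≤ c) (n : ℕ) (x : M) :
    ‖(coc f A n x : X →L[ℝ] X)‖ ≤ c ^ n ∧ ‖(↑(coc f A n x)⁻¹ : X →L[ℝ] X)‖ ≤ c ^ n := by
  induction n generalizing x with
  | zero => exact ⟨ContinuousLinearMap.norm_id_le, ContinuousLinearMap.norm_id_le⟩
  | succ n ih =>
    have hc : 0 ≤ c := (norm_nonneg _).trans (hA x).1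
    simp only [coc, mul_inv_rev, ContinuousLinearEquiv.toContinuousLinearMap_mul, pow_succ]
    constructor
    · exact (norm_mul_le _ _).trans
        (mul_le_mul (ih (f x)).1 (hA x).1 (norm_nonneg _) (pow_nonneg hc n))
    · rw [mul_comm]
      exact (norm_mul_le _ _).trans (mul_le_mul (hA x).2 (ih (f x)).2 (norm_nonneg _) hc)

lemma continuous_coc [TopologicalSpace M] (hf : Continuous f) (hA : Continuous A) (n : ℕ) :
    Continuous (coc f A n) := by
  induction n with
  | zero => exact continuous_const
  | succ n ih => exact (ih.comp hf).mul hA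

lemma coc_eq_mul_inv {x : M}
    (h : ∀ k, A (f^[k] x) = C (f^[k + 1] x) * (C (f^[k] x))⁻¹) (n : ℕ) :
    coc f A n x = C (f^[n] x) * (C x)⁻¹ := by
  induction n generalizing x with
  | zero => simp [coc]
  | succ n ih =>
    have hfx : ∀ k, A (f^[k] (f x)) = C (f^[k + 1] (f x)) * (C (f^[k] (f x)))⁻¹ := fun k => by
      simpa only [← Function.iterate_succ_apply] using h (k + 1)
    have h0 : A x = C (f x) * (C x)⁻¹ := by simpa using h 0
    rw [coc, ih hfx, h0, ← Function.iterate_succ_apply, mul_assoc, inv_mul_cancel_left]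

lemma ae_coc_eq_mul_inv [MeasurableSpace M] {μ : Measure M}
    (hf : Measure.QuasiMeasurePreserving f μ μ) (h : ∀ᵐ x ∂μ, A x = C (f x) * (C x)⁻¹) :
    ∀ᵐ x ∂μ, ∀ n, coc f A n x = C (f^[n] x) * (C x)⁻¹ := by
  have horbit : ∀ᵐ x ∂μ, ∀ k, A (f^[k] x) = C (f^[k + 1] x) * (C (f^[k] x))⁻¹ :=
    ae_all_iff.2 fun k => ((hf.iterate k).ae h).mono fun x hx => by
      rwa [Function.iterate_succ_apply']
  exact horbit.mono fun x hx => coc_eq_mul_inv hx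

end Cocycle

lemma MuContinuous.exists_isCompact_measureReal_compl_lt [TopologicalSpace M] [T2Space M]
    [MeasurableSpace M] [OpensMeasurableSpace M] {μ : Measure M} [IsProbabilityMeasure μ]
    {G : Type*} [TopologicalSpace G] {C : M → G} (hC : MuContinuous μ C) {ε : ℝ} (hε : 0 < ε) :
    ∃ K, IsCompact K ∧ μ.real Kᶜ < ε ∧ IsCompact (C '' K) := by
  obtain ⟨Ks, hKs, hKs_univ, hC_Ks⟩ := hC
  have hlim : Tendsto (fun N => μ.real (accumulate Ks N)ᶜ) atTop (𝓝 0) := by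
    have h := tendsto_measure_iUnion_accumulate (μ := μ) (f := Ks)
    rw [hKs_univ] at h
    have h' : Tendsto (fun N => μ.real (accumulate Ks N)) atTop (𝓝 1) :=
      (ENNReal.tendsto_toReal ENNReal.one_ne_top).comp h
    have hcompl (N : ℕ) : μ.real (accumulate Ks N)ᶜ = 1 - μ.real (accumulate Ks N) :=
      probReal_compl_eq_one_sub (isCompact_accumulate hKs N).measurableSet
    simp_rw [hcompl]
    simpa using (tendsto_const_nhds (x := (1 : ℝ))).sub h'
  obtain ⟨N, hN⟩ := (hlim.eventually (gt_mem_nhds hε)).exists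
  refine ⟨accumulate Ks N, isCompact_accumulate hKs N, hN, ?_⟩
  rw [accumulate_def, image_iUnion₂]
  exact isCompact_accumulate (fun i => (hKs i).image_of_continuousOn (hC_Ks i)) N

section Integrals

variable [MeasurableSpace M] {μ : Measure M} [IsProbabilityMeasure μ]

lemma abs_integral_le_add_of_abs_le {u : M → ℝ} (hu : Integrable u μ) {s : Set M}
    (hs : MeasurableSet s) {a b : ℝ} (ha : ∀ x, |u x| ≤ a) (hb : ∀ᵐ x ∂μ, x ∈ s → |u x| ≤ b)
    (hb₀ : 0 ≤ b) : |∫ x, u x ∂μ| ≤ b + μ.real sᶜ * a := by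
  have hin : |∫ x in s, u x ∂μ| ≤ b * μ.real s :=
    norm_setIntegral_le_of_norm_le_const_ae' (measure_lt_top μ s) (f := u) hb
  have hout : |∫ x, u x ∂μ - ∫ x in s, u x ∂μ| ≤ μ.real sᶜ * a :=
    norm_integral_sub_setIntegral_le (f := u) (ae_of_all μ ha) hs hu
  calc |∫ x, u x ∂μ| ≤ |∫ x in s, u x ∂μ| + |∫ x, u x ∂μ - ∫ x in s, u x ∂μ| :=
        by linarith [abs_sub_abs_le_abs_sub (∫ x, u x ∂μ) (∫ x in s, u x ∂μ)]
    _ ≤ b * μ.real s + μ.real sᶜ * a := add_le_add hin hout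
    _ ≤ b + μ.real sᶜ * a := by
        gcongr
        exact mul_le_of_le_one_right hb₀ measureReal_le_one

lemma tendsto_inv_mul_integral_zero {u : ℕ → M → ℝ} (hu : ∀ n, Integrable (u n) μ) {L : ℝ}
    (hL₀ : 0 ≤ L) (hL : ∀ n x, |u n x| ≤ n * L)
    (htight : ∀ ε > 0, ∃ R, 0 ≤ R ∧ ∀ n, ∃ s, MeasurableSet s ∧ μ.real sᶜ ≤ ε ∧
      ∀ᵐ x ∂μ, x ∈ s → |u n x| ≤ R) :
    Tendsto (fun n : ℕ => (n : ℝ)⁻¹ * ∫ x, u n x ∂μ) atTop (𝓝 0) := by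
  rw [Metric.tendsto_atTop]
  intro δ hδ
  set ε := δ / (2 * (L + 1)) with hε
  obtain ⟨R, hR₀, hR⟩ := htight ε (by positivity)
  obtain ⟨N, hN⟩ := exists_nat_gt (2 * R / δ)
  refine ⟨N + 1, fun n hn => ?_⟩
  obtain ⟨s, hs, hsε, hsR⟩ := hR n
  have hn : (N : ℝ) + 1 ≤ n := by exact_mod_cast hn
  have hn₀ : (0 : ℝ) < n := by linarith [(Nat.cast_nonneg N : (0 : ℝ) ≤ N)]
  have hbound := abs_integral_le_add_of_abs_le (hu n) hs (hL n) hsR hR₀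
  have hεL : ε * L < δ / 2 := by
    rw [hε, div_mul_eq_mul_div, div_lt_div_iff₀ (by positivity) two_pos]
    nlinarith
  have hRn : R < n * (δ / 2) := by
    rw [div_lt_iff₀ hδ] at hN
    nlinarith
  rw [Real.dist_eq, sub_zero, abs_mul, abs_inv, abs_of_pos hn₀, inv_mul_lt_iff₀ hn₀]
  calc |∫ x, u n x ∂μ| ≤ R + μ.real sᶜ * (n * L) := hbound
    _ ≤ R + ε * (n * L) := by gcongr
    _ < n * (δ / 2) + n * (δ / 2) := by nlinarith
    _ = n * δ := by ring

end Integrals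

section LyapunovExponents

variable [MeasurableSpace M] {μ : Measure M} [IsProbabilityMeasure μ]

lemma tendsto_inv_mul_integral_log_norm_zero {E : ℕ → M → X ≃L[ℝ] X}
    (hE : ∀ n, Measurable (E n)) {c : ℝ} (hc : 1 ≤ c)
    (hbound : ∀ n x, ‖(E n x : X →L[ℝ] X)‖ ≤ c ^ n ∧ ‖(↑(E n x)⁻¹ : X →L[ℝ] X)‖ ≤ c ^ n)
    (htight : ∀ ε > 0, ∃ R, 1 ≤ R ∧ ∀ n, ∃ s, MeasurableSet s ∧ μ.real sᶜ ≤ ε ∧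
      ∀ᵐ x ∂μ, x ∈ s → ‖(E n x : X →L[ℝ] X)‖ ≤ R ∧ ‖(↑(E n x)⁻¹ : X →L[ℝ] X)‖ ≤ R) :
    Tendsto (fun n : ℕ => (n : ℝ)⁻¹ * ∫ x, Real.log ‖(E n x : X →L[ℝ] X)‖ ∂μ) atTop (𝓝 0) := by
  have hL (n : ℕ) (x : M) : |Real.log ‖(E n x : X →L[ℝ] X)‖| ≤ n * Real.log c := by
    rw [← Real.log_pow]
    exact abs_log_norm_le (one_le_pow₀ hc) (hbound n x).1 (hbound n x).2
  have hint (n : ℕ) : Integrable (fun x => Real.log ‖(E n x : X →L[ℝ] X)‖) μ :=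
    .of_bound (Real.measurable_log.comp
      (continuous_toContinuousLinearMap.measurable.comp (hE n)).norm).aestronglyMeasurable
      _ (ae_of_all μ (hL n))
  refine tendsto_inv_mul_integral_zero hint (Real.log_nonneg hc) hL fun ε hε => ?_
  obtain ⟨R, hR, hRs⟩ := htight ε hε
  refine ⟨Real.log R, Real.log_nonneg hR, fun n => ?_⟩
  obtain ⟨s, hs, hsε, hsR⟩ := hRs n
  exact ⟨s, hs, hsε, hsR.mono fun x hx hxs => abs_log_norm_le hR (hx hxs).1 (hx hxs).2⟩

lemma exists_norm_coc_le_off_small_set [TopologicalSpace M] [T2Space M] [OpensMeasurableSpace M]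
    {f : M → M} (hf : MeasurePreserving f μ μ) {A C : M → X ≃L[ℝ] X} (hC : MuContinuous μ C)
    (hcob : ∀ᵐ x ∂μ, A x = C (f x) * (C x)⁻¹) {ε : ℝ} (hε : 0 < ε) :
    ∃ R, 1 ≤ R ∧ ∀ n, ∃ s, MeasurableSet s ∧ μ.real sᶜ ≤ ε ∧ ∀ᵐ x ∂μ, x ∈ s →
      ‖(coc f A n x : X →L[ℝ] X)‖ ≤ R ∧ ‖(↑(coc f A n x)⁻¹ : X →L[ℝ] X)‖ ≤ R := by
  obtain ⟨K, hK, hKε, hCK⟩ := hC.exists_isCompact_measureReal_compl_lt (half_pos hε)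
  obtain ⟨R, hR, hRK⟩ := hCK.exists_norm_le_and_norm_inv_le
  have hCR {x} (hx : x ∈ K) := hRK (C x) (mem_image_of_mem C hx)
  refine ⟨R * R, one_le_mul_of_one_le_of_one_le hR hR, fun n => ?_⟩
  have hKm := hK.measurableSet
  refine ⟨K ∩ f^[n] ⁻¹' K, hKm.inter (hKm.preimage (hf.iterate n).measurable), ?_, ?_⟩
  · have hpre : μ.real (f^[n] ⁻¹' K)ᶜ = μ.real Kᶜ := by
      rw [← preimage_compl, (hf.iterate n).measureReal_preimage hKm.compl.nullMeasurableSet]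
    calc μ.real (K ∩ f^[n] ⁻¹' K)ᶜ ≤ μ.real Kᶜ + μ.real (f^[n] ⁻¹' K)ᶜ := by
          rw [compl_inter]; exact measureReal_union_le _ _
      _ ≤ ε := by linarith
  · filter_upwards [ae_coc_eq_mul_inv hf.quasiMeasurePreserving hcob] with x hx ⟨hxK, hfxK⟩
    have h₀ : (0 : ℝ) ≤ R := by linarith
    rw [hx n, mul_inv_rev, inv_inv, ContinuousLinearEquiv.toContinuousLinearMap_mul,
      ContinuousLinearEquiv.toContinuousLinearMap_mul]
    exact ⟨(norm_mul_le _ _).trans (mul_le_mul (hCR hfxK).1 (hCR hxK).2 (norm_nonneg _) h₀),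
      (norm_mul_le _ _).trans (mul_le_mul (hCR hxK).1 (hCR hfxK).2 (norm_nonneg _) h₀)⟩

end LyapunovExponents

theorem stmt1_general {M : Type*} [MetricSpace M] [CompactSpace M] [MeasurableSpace M] [BorelSpace M]
    {X : Type*} [NormedAddCommGroup X] [NormedSpace ℝ X]
    (f : M → M) (hf : Continuous f)
    (μ : Measure M) [IsProbabilityMeasure μ] (herg : Ergodic f μ)
    (A : M → (X ≃L[ℝ] X)) (hA : Continuous A)
    (C : M → (X ≃L[ℝ] X)) (hC : MuContinuous μ C)
    (hcob : ∀ᵐ x ∂μ, A x = C (f x) * (C x)⁻¹) :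
    Tendsto (fun n : ℕ =>
        (n : ℝ)⁻¹ * ∫ x, Real.log ‖(coc f A n x : X →L[ℝ] X)‖ ∂μ) atTop (𝓝 0) ∧
    Tendsto (fun n : ℕ =>
        (n : ℝ)⁻¹ * ∫ x, Real.log ‖(((coc f A n x)⁻¹ : X ≃L[ℝ] X) : X →L[ℝ] X)‖ ∂μ) atTop (𝓝 0) := by
  obtain ⟨c, hc, hcA⟩ := (isCompact_range hA).exists_norm_le_and_norm_inv_le
  have hbound := norm_coc_le_pow (f := f) fun x => hcA (A x) (mem_range_self x)
  have htight := fun ε (hε : 0 < ε) =>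
    exists_norm_coc_le_off_small_set herg.toMeasurePreserving hC hcob hε
  have hmeas (n : ℕ) := (continuous_coc hf hA n).measurable
  refine ⟨tendsto_inv_mul_integral_log_norm_zero hmeas hc hbound htight, ?_⟩
  refine tendsto_inv_mul_integral_log_norm_zero (fun n => (hmeas n).inv) hc
    (fun n x => by simpa only [inv_inv] using (hbound n x).symm) fun ε hε => ?_
  obtain ⟨R, hR, hRs⟩ := htight ε hε
  refine ⟨R, hR, fun n => ?_⟩
  obtain ⟨s, hs, hsε, hsR⟩ := hRs n
  exact ⟨s, hs, hsε, hsR.mono fun x hx hxs => by simpa only [inv_inv] using (hx hxs).symm⟩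

/-- If `A : M → GL(X)` is continuous and there is a `μ`-continuous `C` with
`A(x) = C(fx) ∘ C(x)⁻¹` for `μ`-a.e. `x`, with `μ` an ergodic invariant Borel probability
measure of a continuous map `f` of a compact metric space, then
`λ₊(𝒜,μ) = λ₋(𝒜,μ) = 0`, i.e. `(1/n) ∫ log‖𝒜ₓⁿ‖ dμ → 0` and
`(1/n) ∫ log‖(𝒜ₓⁿ)⁻¹‖ dμ → 0`. -/
theorem stmt1 {M : Type*} [MetricSpace M] [CompactSpace M] [MeasurableSpace M] [BorelSpace M]
    {X : Type*} [NormedAddCommGroup X] [NormedSpace ℝ X] [CompleteSpace X]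
    (f : M → M) (hf : Continuous f)
    (μ : Measure M) [IsProbabilityMeasure μ] (herg : Ergodic f μ)
    (A : M → (X ≃L[ℝ] X)) (hA : Continuous A)
    (C : M → (X ≃L[ℝ] X)) (hC : MuContinuous μ C)
    (hcob : ∀ᵐ x ∂μ, A x = C (f x) * (C x)⁻¹) :
    Tendsto (fun n : ℕ =>
        (n : ℝ)⁻¹ * ∫ x, Real.log ‖(coc f A n x : X →L[ℝ] X)‖ ∂μ) atTop (𝓝 0) ∧
    Tendsto (fun n : ℕ =>
        (n : ℝ)⁻¹ * ∫ x, Real.log ‖(((coc f A n x)⁻¹ : X ≃L[ℝ] X) : X →L[ℝ] X)‖ ∂μ) atTop (𝓝 0) :=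
  stmt1_general f hf μ herg A hA C hC hcob
end

section
/- Let (Ω, μ̂) and (S, m) be standard Borel probability spaces and Y a separable complete metric space. Let Φ: Ω → (S → Y) be a map such that Φ(ω): S → Y is Borel for every ω ∈ Ω, and such that for every Borel map h: S → Y and every δ > 0 the set {ω ∈ Ω : d_F(Φ(ω), h) < δ} is Borel in Ω. Then there exists a Borel map Φ̂: Ω × S → Y such that for μ̂-a.e. ω ∈ Ω one has Φ̂(ω, s) = Φ(ω)(s) for m-a.e. s ∈ S. -/
/-! A standard Borel probability space has a separable measure algebra, so finitely-valued maps
built from a countable dense subset of `Y` and a countable measure-dense family of subsets of `S`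
give a sequence `H k` of Borel maps `S → Y` that is dense for the Ky Fan metric. By the
measurability hypothesis, the least `k` with `d_F(Φ ω, H k) < 2⁻ⁿ` depends measurably on `ω`,
so `Ψₙ (ω, s) := H (kₙ ω) s` is jointly Borel. For every `ω`, Borel–Cantelli gives
`Ψₙ (ω, s) → Φ ω s` for `m`-a.e. `s`, and the pointwise limit of the `Ψₙ`, which is Borel because
`Y` is complete, is the required `Φ̂`. -/

open MeasureTheory Filter Topology

/-- The Ky Fan distance between measurable maps into a metric space:
`d_F(φ,ψ) = inf {ε > 0 : m{s : dist(φ(s), ψ(s)) > ε} ≤ ε}`. -/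
noncomputable def kyFan {S Y : Type*} [MeasurableSpace S] [PseudoMetricSpace Y]
    (m : Measure S) (φ ψ : S → Y) : ℝ :=
  sInf {ε : ℝ | 0 < ε ∧ m {s | ε < dist (φ s) (ψ s)} ≤ ENNReal.ofReal ε}

open Set
open scoped ENNReal

section KyFan

variable {S Y : Type*} [MeasurableSpace S] [PseudoMetricSpace Y] {m : Measure S} {φ ψ : S → Y}

theorem kyFan_le_of_measure_le {ε : ℝ} (hε : 0 < ε)
    (h : m {s | ε < dist (φ s) (ψ s)} ≤ ENNReal.ofReal ε) : kyFan m φ ψ ≤ ε :=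
  csInf_le ⟨0, fun _ hx => hx.1.le⟩ ⟨hε, h⟩

theorem measure_lt_dist_le_of_kyFan_lt [IsProbabilityMeasure m] {δ : ℝ} (h : kyFan m φ ψ < δ) :
    m {s | δ < dist (φ s) (ψ s)} ≤ ENNReal.ofReal δ := by
  have hne : {ε : ℝ | 0 < ε ∧ m {s | ε < dist (φ s) (ψ s)} ≤ ENNReal.ofReal ε}.Nonempty :=
    ⟨1, one_pos, by simpa using prob_le_one⟩
  obtain ⟨ε, ⟨-, hε⟩, hεδ⟩ := (csInf_lt_iff ⟨0, fun _ hx => hx.1.le⟩ hne).mp h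
  calc m {s | δ < dist (φ s) (ψ s)}
      ≤ m {s | ε < dist (φ s) (ψ s)} := measure_mono fun s hs => hεδ.trans hs
    _ ≤ ENNReal.ofReal ε := hε
    _ ≤ ENNReal.ofReal δ := ENNReal.ofReal_le_ofReal hεδ.le

end KyFan

section FirstHit

variable {S Y : Type*}

open Classical in
/-- Taking the value of the first set of the list that contains `s` spares us from making the sets
disjoint. -/
noncomputable def firstHit (y₀ : Y) : List (Y × Set S) → S → Y
  | [] => fun _ => y₀
  | p :: l => fun s => if s ∈ p.2 then p.1 else firstHit y₀ l s

variable {y₀ : Y}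

theorem measurable_firstHit [MeasurableSpace S] [MeasurableSpace Y] {l : List (Y × Set S)}
    (hl : ∀ p ∈ l, MeasurableSet p.2) : Measurable (firstHit y₀ l) := by
  induction l with
  | nil => exact measurable_const
  | cons p l ih =>
    simp only [List.mem_cons, forall_eq_or_imp] at hl
    exact Measurable.ite hl.1 measurable_const (ih hl.2)

theorem firstHit_spec (P : S → Y → Prop) {l : List (Y × Set S)} (hl : ∀ p ∈ l, ∀ s ∈ p.2, P s p.1)
    {s : S} (hs : ∃ p ∈ l, s ∈ p.2) : P s (firstHit y₀ l s) := by
  induction l with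
  | nil => simp at hs
  | cons p l ih =>
    simp only [List.mem_cons, forall_eq_or_imp, exists_eq_or_imp] at hl hs
    by_cases hp : s ∈ p.2
    · simpa [firstHit, hp] using hl.1 s hp
    · simpa [firstHit, hp] using ih hl.2 (hs.resolve_left hp)

theorem firstHit_cons_ne_subset (p q : Y × Set S) (l l' : List (Y × Set S)) (hpq : p.1 = q.1) :
    {s | firstHit y₀ (p :: l) s ≠ firstHit y₀ (q :: l') s} ⊆
      symmDiff p.2 q.2 ∪ {s | firstHit y₀ l s ≠ firstHit y₀ l' s} := by
  intro s hs
  by_cases hp : s ∈ p.2 <;> by_cases hq : s ∈ q.2 <;> simp_all [firstHit, Set.mem_symmDiff]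

end FirstHit

section Approx

variable {S Y : Type*} [MeasurableSpace S] {m : Measure S} [IsFiniteMeasure m] {y₀ : Y}

theorem DenseRange.exists_firstHit_approx [PseudoMetricSpace Y] [MeasurableSpace Y]
    [OpensMeasurableSpace Y] {D : ℕ → Y} (hD : DenseRange D) {φ : S → Y} (hφ : Measurable φ)
    {ε η : ℝ} (hε : 0 < ε) (hη : 0 < η) :
    ∃ l : List (Y × Set S), (∀ p ∈ l, p.1 ∈ range D ∧ MeasurableSet p.2) ∧
      m {s | ε ≤ dist (φ s) (firstHit y₀ l s)} < ENNReal.ofReal η := by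
  set A : ℕ → Set S := fun j => φ ⁻¹' Metric.ball (D j) ε
  set C : ℕ → Set S := fun N => ⋂ j < N, (A j)ᶜ
  have hA : ∀ j, MeasurableSet (A j) := fun j => hφ Metric.isOpen_ball.measurableSet
  have hCempty : ⋂ N, C N = ∅ := by
    refine eq_empty_of_forall_notMem fun s hs => ?_
    obtain ⟨j, hj⟩ := Metric.denseRange_iff.mp hD (φ s) ε hε
    exact mem_iInter₂.mp (mem_iInter.mp hs (j + 1)) j j.lt_succ_self
      (by simpa [A, dist_comm] using hj)
  have hC : Tendsto (m ∘ C) atTop (𝓝 (m (⋂ N, C N))) :=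
    tendsto_measure_iInter_atTop
      (fun N => (MeasurableSet.biInter (to_countable _) fun j _ => (hA j).compl).nullMeasurableSet)
      (fun N N' hN => biInter_subset_biInter_left fun j hj => lt_of_lt_of_le hj hN)
      ⟨0, measure_ne_top m _⟩
  rw [hCempty, measure_empty] at hC
  obtain ⟨N, hN⟩ := (hC.eventually (gt_mem_nhds (ENNReal.ofReal_pos.mpr hη))).exists
  refine ⟨(List.range N).map fun j => (D j, A j), ?_, lt_of_le_of_lt (measure_mono ?_) hN⟩
  · simp only [List.mem_map, List.mem_range]
    rintro p ⟨j, -, rfl⟩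
    exact ⟨mem_range_self j, hA j⟩
  · intro s hs
    simp only [C, mem_iInter, mem_compl_iff]
    intro j hj hsj
    refine (firstHit_spec (y₀ := y₀) (fun s y => dist (φ s) y < ε) ?_ ?_).not_ge hs
    · simp only [List.mem_map, List.mem_range]
      rintro p ⟨j, -, rfl⟩ s hs
      simpa [A] using hs
    · exact ⟨_, List.mem_map.mpr ⟨j, List.mem_range.mpr hj, rfl⟩, hsj⟩

theorem MeasureTheory.Measure.MeasureDense.exists_firstHit_approx {𝒜 : Set (Set S)}
    (h𝒜 : m.MeasureDense 𝒜) (l : List (Y × Set S)) (hl : ∀ p ∈ l, MeasurableSet p.2)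
    {η : ℝ} (hη : 0 < η) :
    ∃ l' : List (Y × Set S), l'.map Prod.fst = l.map Prod.fst ∧ (∀ p ∈ l', p.2 ∈ 𝒜) ∧
      m {s | firstHit y₀ l s ≠ firstHit y₀ l' s} < ENNReal.ofReal η := by
  induction l generalizing η with
  | nil => exact ⟨[], rfl, by simp, by simpa using hη⟩
  | cons p l ih =>
    simp only [List.mem_cons, forall_eq_or_imp] at hl
    obtain ⟨t, ht𝒜, ht⟩ := h𝒜.approx p.2 hl.1 (measure_ne_top m _) (η / 2) (by positivity)
    obtain ⟨l', hfst, hl'𝒜, hl'⟩ := ih hl.2 (half_pos hη)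
    refine ⟨(p.1, t) :: l', by simp [hfst], ?_, ?_⟩
    · simp only [List.mem_cons, forall_eq_or_imp]
      exact ⟨ht𝒜, hl'𝒜⟩
    · calc m {s | firstHit y₀ (p :: l) s ≠ firstHit y₀ ((p.1, t) :: l') s}
          ≤ m (symmDiff p.2 t) + m {s | firstHit y₀ l s ≠ firstHit y₀ l' s} :=
            (measure_mono (firstHit_cons_ne_subset p (p.1, t) l l' rfl)).trans
              (measure_union_le _ _)
        _ < ENNReal.ofReal (η / 2) + ENNReal.ofReal (η / 2) := ENNReal.add_lt_add ht hl'
        _ = ENNReal.ofReal η := by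
          rw [← ENNReal.ofReal_add (by positivity) (by positivity), add_halves]

end Approx

theorem exists_seq_dense_kyFan {S Y : Type*} [MeasurableSpace S] [PseudoMetricSpace Y]
    [TopologicalSpace.SeparableSpace Y] [MeasurableSpace Y] [OpensMeasurableSpace Y] [Nonempty Y]
    (m : Measure S) [IsFiniteMeasure m] [IsSeparable m] :
    ∃ H : ℕ → S → Y, (∀ k, Measurable (H k)) ∧
      ∀ φ : S → Y, Measurable φ → ∀ δ : ℝ, 0 < δ → ∃ k, kyFan m φ (H k) < δ := by
  obtain ⟨𝒜, h𝒜c, h𝒜⟩ := exists_countable_measureDense m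
  obtain ⟨D, hD⟩ := TopologicalSpace.exists_dense_seq Y
  set T : Set (Y × Set S) := range D ×ˢ 𝒜
  have : Countable T := ((countable_range D).prod h𝒜c).to_subtype
  set y₀ := D 0
  set g : List T → S → Y := fun l => firstHit y₀ (l.map Subtype.val)
  obtain ⟨H, hH⟩ := (countable_range g).exists_eq_range ⟨_, mem_range_self []⟩
  refine ⟨H, fun k => ?_, fun φ hφ δ hδ => ?_⟩
  · obtain ⟨l, hl⟩ : H k ∈ range g := hH ▸ mem_range_self k
    rw [← hl]
    refine measurable_firstHit fun p hp => ?_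
    obtain ⟨q, -, rfl⟩ := List.mem_map.mp hp
    exact h𝒜.measurable _ q.2.2
  obtain ⟨l, hlD, hl⟩ :=
    hD.exists_firstHit_approx (y₀ := y₀) (m := m) hφ (half_pos hδ) (by positivity : 0 < δ / 4)
  obtain ⟨l', hfst, hl'𝒜, hl'⟩ :=
    h𝒜.exists_firstHit_approx (y₀ := y₀) l (fun p hp => (hlD p hp).2) (by positivity : 0 < δ / 4)
  have hl'T : ∀ p ∈ l', p ∈ T := by
    intro p hp
    obtain ⟨q, hq, hqp⟩ := List.mem_map.mp (hfst ▸ List.mem_map_of_mem hp : p.1 ∈ l.map Prod.fst)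
    exact ⟨hqp ▸ (hlD q hq).1, hl'𝒜 p hp⟩
  lift l' to List T using hl'T
  obtain ⟨k, hk⟩ : g l' ∈ range H := hH ▸ mem_range_self l'
  refine ⟨k, (kyFan_le_of_measure_le (half_pos hδ) ?_).trans_lt (half_lt_self hδ)⟩
  rw [hk]
  calc m {s | δ / 2 < dist (φ s) (g l' s)}
      ≤ m ({s | δ / 2 ≤ dist (φ s) (firstHit y₀ l s)} ∪ {s | firstHit y₀ l s ≠ g l' s}) := by
        refine measure_mono fun s hs => ?_
        by_cases heq : firstHit y₀ l s = g l' s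
        · exact Or.inl (by rw [mem_ofPred_eq, heq]; exact le_of_lt hs)
        · exact Or.inr heq
    _ ≤ ENNReal.ofReal (δ / 4) + ENNReal.ofReal (δ / 4) :=
        (measure_union_le _ _).trans (add_le_add hl.le hl'.le)
    _ = ENNReal.ofReal (δ / 2) := by
        rw [← ENNReal.ofReal_add (by positivity) (by positivity)]
        ring_nf

theorem ae_tendsto_of_measure_lt_dist_le {S Y : Type*} [MeasurableSpace S] [PseudoMetricSpace Y]
    {m : Measure S} {f : ℕ → S → Y} {g : S → Y} {ε : ℕ → ℝ} (hε₀ : ∀ n, 0 ≤ ε n)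
    (hε : Summable ε) (h : ∀ n, m {s | ε n < dist (f n s) (g s)} ≤ ENNReal.ofReal (ε n)) :
    ∀ᵐ s ∂m, Tendsto (fun n => f n s) atTop (𝓝 (g s)) := by
  have hsum : ∑' n, m {s | ε n < dist (f n s) (g s)} ≠ ∞ :=
    ne_top_of_le_ne_top (b := ENNReal.ofReal (∑' n, ε n)) ENNReal.ofReal_ne_top <| by
      rw [ENNReal.ofReal_tsum_of_nonneg hε₀ hε]
      exact ENNReal.tsum_le_tsum h
  filter_upwards [ae_eventually_notMem hsum] with s hs
  refine tendsto_iff_dist_tendsto_zero.mpr (squeeze_zero' (.of_forall fun n => dist_nonneg)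
    (hs.mono fun n hn => ?_) hε.tendsto_atTop_zero)
  simpa using hn

theorem stmt5_general {Ω S : Type*} [MeasurableSpace Ω]
    [MeasurableSpace S] [StandardBorelSpace S]
    (μh : Measure Ω) [IsProbabilityMeasure μh] (m : Measure S) [IsProbabilityMeasure m]
    {Y : Type*} [MetricSpace Y] [TopologicalSpace.SeparableSpace Y] [CompleteSpace Y]
    [MeasurableSpace Y] [BorelSpace Y]
    (Φ : Ω → S → Y) (hΦ : ∀ ω, Measurable (Φ ω))
    (hmeas : ∀ h : S → Y, Measurable h → ∀ δ : ℝ, 0 < δ →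
      MeasurableSet {ω : Ω | kyFan m (Φ ω) h < δ}) :
    ∃ Φhat : Ω × S → Y, Measurable Φhat ∧
      ∀ᵐ ω ∂μh, ∀ᵐ s ∂m, Φhat (ω, s) = Φ ω s := by
  obtain ⟨ω₀⟩ := nonempty_of_isProbabilityMeasure μh
  obtain ⟨s₀⟩ := nonempty_of_isProbabilityMeasure m
  have : Nonempty Y := ⟨Φ ω₀ s₀⟩
  obtain ⟨H, hH, hHdense⟩ := exists_seq_dense_kyFan (Y := Y) m
  have hex : ∀ n ω, ∃ k, kyFan m (Φ ω) (H k) < (1 / 2 : ℝ) ^ n :=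
    fun n ω => hHdense _ (hΦ ω) _ (by positivity)
  have hκ : ∀ n, Measurable fun ω => Nat.find (hex n ω) := fun n =>
    measurable_find (hex n) fun k => hmeas _ (hH k) _ (by positivity)
  set Ψ : ℕ → Ω × S → Y := fun n p => H (Nat.find (hex n p.1)) p.2
  have hΨ : ∀ n, Measurable (Ψ n) := fun n =>
    (measurable_from_prod_countable_left (f := fun q : S × ℕ => H q.2 q.1) hH).comp
      (measurable_snd.prodMk ((hκ n).comp measurable_fst))
  refine ⟨fun p => limUnder atTop (Ψ · p),
    (StronglyMeasurable.limUnder fun n => (hΨ n).stronglyMeasurable).measurable,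
    .of_forall fun ω => ?_⟩
  have hconv : ∀ᵐ s ∂m, Tendsto (fun n => Ψ n (ω, s)) atTop (𝓝 (Φ ω s)) :=
    ae_tendsto_of_measure_lt_dist_le (fun n => by positivity) summable_geometric_two fun n => by
      simpa only [dist_comm] using measure_lt_dist_le_of_kyFan_lt (Nat.find_spec (hex n ω))
  exact hconv.mono fun s hs => hs.limUnder_eq

/-- A Borel family `Φ : Ω → F(S,Y)` of Borel maps (Borel in the sense that
preimages of Ky Fan balls around Borel maps are Borel) admits a jointly Borel representative
`Φ̂ : Ω × S → Y` with `Φ̂(ω,·) = Φ(ω)` m-a.e., for μ̂-a.e. ω. -/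
theorem stmt5 {Ω S : Type*} [MeasurableSpace Ω] [StandardBorelSpace Ω]
    [MeasurableSpace S] [StandardBorelSpace S]
    (μh : Measure Ω) [IsProbabilityMeasure μh] (m : Measure S) [IsProbabilityMeasure m]
    {Y : Type*} [MetricSpace Y] [TopologicalSpace.SeparableSpace Y] [CompleteSpace Y]
    [MeasurableSpace Y] [BorelSpace Y]
    (Φ : Ω → S → Y) (hΦ : ∀ ω, Measurable (Φ ω))
    (hmeas : ∀ h : S → Y, Measurable h → ∀ δ : ℝ, 0 < δ →
      MeasurableSet {ω : Ω | kyFan m (Φ ω) h < δ}) :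
    ∃ Φhat : Ω × S → Y, Measurable Φhat ∧
      ∀ᵐ ω ∂μh, ∀ᵐ s ∂m, Φhat (ω, s) = Φ ω s :=
  stmt5_general μh m Φ hΦ hmeas
end

section
/- Let S be a Polish (complete separable metric) space, m a Borel probability measure on S, and Y a separable metric space. Let g_n, g: S → S be Borel maps that preserve m, and let φ_n, φ: S → Y be Borel maps. If g_n → g in measure and φ_n → φ in measure, then φ_n ∘ g_n → φ ∘ g in measure. -/
/-!
By Lusin's theorem `φ₀` is continuous, hence uniformly continuous, on a compact set `K` whose
complement is small. As `gₙ` and `g` preserve `m`, outside a small set both `gₙ s` and `g s`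
lie in `K`, so `φ₀ ∘ gₙ → φ₀ ∘ g` in measure. Measure preservation of `gₙ` also turns
`φₙ → φ₀` into `dist (φₙ (gₙ s)) (φ₀ (gₙ s)) → 0` in measure, and the triangle inequality
combines the two.
-/

open MeasureTheory Filter Topology

/-- Convergence in measure of measurable maps into a metric space. -/
def TendstoInMeas {S Y : Type*} [MeasurableSpace S] [Dist Y]
    (m : Measure S) (φ : ℕ → S → Y) (ψ : S → Y) : Prop :=
  ∀ ε : ℝ, 0 < ε → Tendsto (fun n => m {s | ε < dist (φ n s) (ψ s)}) atTop (𝓝 0)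

open Set
open scoped ENNReal

section Lusin

variable {S Y : Type*} [TopologicalSpace S] [MeasurableSpace S] [OpensMeasurableSpace S]
  {m : Measure S} [IsFiniteMeasure m]

theorem MeasurableSet.exists_isClosed_subset_isClosed_subset_compl [m.WeaklyRegular] {A : Set S}
    (hA : MeasurableSet A) {ε : ℝ≥0∞} (hε : ε ≠ 0) :
    ∃ C ⊆ A, ∃ D ⊆ Aᶜ, IsClosed C ∧ IsClosed D ∧ m (C ∪ D)ᶜ < ε := by
  have hε2 : ε / 2 ≠ 0 := ENNReal.div_ne_zero.2 ⟨hε, ENNReal.ofNat_ne_top⟩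
  obtain ⟨C, hCA, hC, hAC⟩ := hA.exists_isClosed_sdiff_lt (measure_ne_top m A) hε2
  obtain ⟨D, hDA, hD, hAD⟩ := hA.compl.exists_isClosed_sdiff_lt (measure_ne_top m Aᶜ) hε2
  refine ⟨C, hCA, D, hDA, hC, hD, ?_⟩
  have hsub : (C ∪ D)ᶜ ⊆ (A \ C) ∪ (Aᶜ \ D) := by
    intro s hs
    by_cases hsA : s ∈ A <;> simp_all
  calc m (C ∪ D)ᶜ ≤ m (A \ C) + m (Aᶜ \ D) := (measure_mono hsub).trans (measure_union_le _ _)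
    _ < ε / 2 + ε / 2 := ENNReal.add_lt_add hAC hAD
    _ = ε := ENNReal.add_halves ε

variable [TopologicalSpace Y] [SecondCountableTopology Y] [MeasurableSpace Y]
  [OpensMeasurableSpace Y] {f : S → Y}

theorem Measurable.exists_isClosed_measure_compl_lt_continuousOn [m.WeaklyRegular]
    (hf : Measurable f) {δ : ℝ≥0∞} (hδ : δ ≠ 0) :
    ∃ F, IsClosed F ∧ m Fᶜ < δ ∧ ContinuousOn f F := by
  open TopologicalSpace in
  obtain ⟨δ', hδ'pos, hδ'sum⟩ := ENNReal.exists_pos_sum_of_countable' hδ (countableBasis Y)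
  choose C hCV D hDV hC hD hCD using fun V : countableBasis Y =>
    MeasurableSet.exists_isClosed_subset_isClosed_subset_compl (m := m)
      (hf (isOpen_of_mem_countableBasis V.2).measurableSet) (hδ'pos V).ne'
  refine ⟨⋂ V, C V ∪ D V, isClosed_iInter fun V => (hC V).union (hD V), ?_, ?_⟩
  · rw [compl_iInter]
    exact (measure_iUnion_le _).trans_lt
      ((ENNReal.tsum_le_tsum fun V => (hCD V).le).trans_lt hδ'sum)
  · rw [continuousOn_iff_continuous_domRestrict, (isBasis_countableBasis Y).continuous_iff]
    intro V hV
    -- each point of the intersection lies in `C V ⊆ f ⁻¹' V` or in `D V ⊆ (f ⁻¹' V)ᶜ`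
    convert (hD ⟨V, hV⟩).isOpen_compl.preimage continuous_subtype_val using 1
    ext ⟨s, hs⟩
    have hs' := mem_iInter.1 hs ⟨V, hV⟩
    constructor
    · exact fun hfs hsD => hDV ⟨V, hV⟩ hsD hfs
    · exact fun hsD => hCV ⟨V, hV⟩ (hs'.resolve_right hsD)

theorem Measurable.exists_isCompact_measure_compl_lt_continuousOn [T2Space S] [m.WeaklyRegular]
    [m.InnerRegularCompactLTTop] (hf : Measurable f) {δ : ℝ≥0∞} (hδ : δ ≠ 0) :
    ∃ K, IsCompact K ∧ m Kᶜ < δ ∧ ContinuousOn f K := by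
  have hδ2 : δ / 2 ≠ 0 := ENNReal.div_ne_zero.2 ⟨hδ, ENNReal.ofNat_ne_top⟩
  obtain ⟨F, hF, hFδ, hfF⟩ := hf.exists_isClosed_measure_compl_lt_continuousOn (m := m) hδ2
  obtain ⟨K, hKF, hK, hFK⟩ := hF.measurableSet.exists_isCompact_sdiff_lt (measure_ne_top m F) hδ2
  refine ⟨K, hK, ?_, hfF.mono hKF⟩
  have hsub : Kᶜ ⊆ Fᶜ ∪ (F \ K) := fun s hs => by by_cases hsF : s ∈ F <;> simp_all
  calc m Kᶜ ≤ m Fᶜ + m (F \ K) := (measure_mono hsub).trans (measure_union_le _ _)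
    _ < δ / 2 + δ / 2 := ENNReal.add_lt_add hFδ hFK
    _ = δ := ENNReal.add_halves δ

end Lusin

section ConvergenceInMeasure

variable {S Y : Type*} [MeasurableSpace S] {m : Measure S} [PseudoMetricSpace Y]

theorem TendstoInMeas.of_tendsto_measure_dist_lt {F G : ℕ → S → Y} {H : S → Y}
    (hFG : ∀ ε, 0 < ε → Tendsto (fun n => m {s | ε < dist (F n s) (G n s)}) atTop (𝓝 0))
    (hG : TendstoInMeas m G H) : TendstoInMeas m F H := by
  intro ε hε
  have hsum := (hFG (ε / 2) (half_pos hε)).add (hG (ε / 2) (half_pos hε))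
  rw [add_zero] at hsum
  refine tendsto_of_tendsto_of_tendsto_of_le_of_le tendsto_const_nhds hsum (fun _ => bot_le)
    fun n => (measure_mono fun s hs => ?_).trans (measure_union_le _ _)
  by_contra! h
  simp only [mem_union, mem_ofPred_eq, not_or, not_lt] at h hs
  linarith [dist_triangle (F n s) (G n s) (H s)]

theorem TendstoInMeas.measurable_comp [MetricSpace S] [BorelSpace S] [IsFiniteMeasure m]
    [m.InnerRegularCompactLTTop] [SecondCountableTopology Y] [MeasurableSpace Y]
    [OpensMeasurableSpace Y] {g : ℕ → S → S} {g₀ : S → S} (hconv : TendstoInMeas m g g₀)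
    (hg : ∀ n, MeasurePreserving (g n) m m) (hg₀ : MeasurePreserving g₀ m m) {f : S → Y}
    (hf : Measurable f) : TendstoInMeas m (fun n => f ∘ g n) (f ∘ g₀) := by
  intro ε hε
  refine ENNReal.tendsto_nhds_zero.2 fun δ hδ => ?_
  have hδ3 : δ / 3 ≠ 0 := ENNReal.div_ne_zero.2 ⟨hδ.ne', ENNReal.ofNat_ne_top⟩
  obtain ⟨K, hK, hKδ, hfK⟩ := hf.exists_isCompact_measure_compl_lt_continuousOn (m := m) hδ3
  obtain ⟨η, hη, hfη⟩ :=
    Metric.uniformContinuousOn_iff_le.1 (hK.uniformContinuousOn_of_continuous hfK) ε hε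
  filter_upwards [ENNReal.tendsto_nhds_zero.1 (hconv η hη) (δ / 3) (pos_iff_ne_zero.2 hδ3)]
    with n hn
  have hsub : {s | ε < dist ((f ∘ g n) s) ((f ∘ g₀) s)} ⊆
      g n ⁻¹' Kᶜ ∪ g₀ ⁻¹' Kᶜ ∪ {s | η < dist (g n s) (g₀ s)} := fun s hs => by
    by_contra! h
    simp only [mem_union, mem_preimage, mem_compl_iff, mem_ofPred_eq, not_or, not_not] at h hs
    exact (hfη _ h.1.1 _ h.1.2 (not_lt.1 h.2)).not_gt hs
  calc m {s | ε < dist ((f ∘ g n) s) ((f ∘ g₀) s)}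
      ≤ m (g n ⁻¹' Kᶜ) + m (g₀ ⁻¹' Kᶜ) + m {s | η < dist (g n s) (g₀ s)} :=
        (measure_mono hsub).trans <| (measure_union_le _ _).trans <|
          add_le_add_left (measure_union_le _ _) _
    _ ≤ δ / 3 + δ / 3 + δ / 3 :=
        add_le_add (add_le_add ((hg n).measure_preimage_le _ |>.trans hKδ.le)
          (hg₀.measure_preimage_le _ |>.trans hKδ.le)) hn
    _ = δ := ENNReal.add_thirds δ

end ConvergenceInMeasure

theorem stmt6_general {S : Type*} [MetricSpace S] [CompleteSpace S] [TopologicalSpace.SeparableSpace S]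
    [MeasurableSpace S] [BorelSpace S]
    (m : Measure S) [IsProbabilityMeasure m]
    {Y : Type*} [MetricSpace Y] [TopologicalSpace.SeparableSpace Y]
    [MeasurableSpace Y] [BorelSpace Y]
    (g : ℕ → S → S) (g₀ : S → S)
    (hgpres : ∀ n, MeasurePreserving (g n) m m) (hg₀pres : MeasurePreserving g₀ m m)
    (φ : ℕ → S → Y) (φ₀ : S → Y)
    (hφ₀ : Measurable φ₀)
    (hgconv : TendstoInMeas m g g₀) (hφconv : TendstoInMeas m φ φ₀) :
    TendstoInMeas m (fun n => φ n ∘ g n) (φ₀ ∘ g₀) := by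
  refine .of_tendsto_measure_dist_lt (G := fun n => φ₀ ∘ g n) (fun ε hε => ?_)
    (hgconv.measurable_comp hgpres hg₀pres hφ₀)
  exact tendsto_of_tendsto_of_tendsto_of_le_of_le tendsto_const_nhds (hφconv ε hε)
    (fun _ => bot_le) fun n => (hgpres n).measure_preimage_le _

/-- Let `S` be Polish with Borel probability measure `m`, `Y` a separable
metric space, `gₙ, g : S → S` Borel and `m`-preserving, and `φₙ, φ : S → Y` Borel. If
`gₙ → g` in measure and `φₙ → φ` in measure, then `φₙ ∘ gₙ → φ ∘ g` in measure. -/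
theorem stmt6 {S : Type*} [MetricSpace S] [CompleteSpace S] [TopologicalSpace.SeparableSpace S]
    [MeasurableSpace S] [BorelSpace S]
    (m : Measure S) [IsProbabilityMeasure m]
    {Y : Type*} [MetricSpace Y] [TopologicalSpace.SeparableSpace Y]
    [MeasurableSpace Y] [BorelSpace Y]
    (g : ℕ → S → S) (g₀ : S → S)
    (hg : ∀ n, Measurable (g n)) (hg₀ : Measurable g₀)
    (hgpres : ∀ n, MeasurePreserving (g n) m m) (hg₀pres : MeasurePreserving g₀ m m)
    (φ : ℕ → S → Y) (φ₀ : S → Y)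
    (hφ : ∀ n, Measurable (φ n)) (hφ₀ : Measurable φ₀)
    (hgconv : TendstoInMeas m g g₀) (hφconv : TendstoInMeas m φ φ₀) :
    TendstoInMeas m (fun n => φ n ∘ g n) (φ₀ ∘ g₀) :=
  stmt6_general m g g₀ hgpres hg₀pres φ φ₀ hφ₀ hgconv hφconv
end

section
/- Let M be a compact metric space, f: M → M a map, X a real Banach space, A: M → GL(X) a map with cocycle 𝒜, and let p ∈ M be a periodic point of f. Then for every ρ > 0 there exist a sequence ε_i → 0 of nonnegative reals and a set S_p ⊆ ℕ with upper density Dens̄(S_p) > 1 − ρ such that for every n ∈ S_p and every 0 ≤ i ≤ n: ‖𝒜_{f^i p}^{n−i}‖ ≤ ‖𝒜_p^n‖·e^{(−λ₊(p)+ε_i)·i} and ‖(𝒜_{f^i p}^{n−i})⁻¹‖ ≤ ‖(𝒜_p^n)⁻¹‖·e^{(λ₋(p)+ε_i)·i}. -/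
open MeasureTheory Filter Topology

variable {M : Type*} {X : Type*} [NormedAddCommGroup X] [NormedSpace ℝ X]

/-- The upper density of a set of naturals: `limsup_N |S ∩ [0, N−1]| / N`. -/
noncomputable def upperDens (S : Set ℕ) : ℝ :=
  Filter.limsup (fun N : ℕ => ((S ∩ Set.Iio N).ncard : ℝ) / (N : ℝ)) atTop

/-!
Fix `ℓ = log ‖·‖` or `ℓ = log ‖(·)⁻¹‖` (both subadditive on `GL(X)` with `ℓ 1 = 0`) and put
`a n = ℓ (𝒜_pⁿ)`. Since the orbit of `p` is finite, `ℓ` is bounded by some `Λ` on the generators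
and their inverses, so up to an additive constant `C` the sequence `a` is subadditive,
`ℓ (𝒜_{fⁱp}ᵐ) ≤ a m + C`, and `a` decreases at most linearly. By Fekete's lemma
`w n = a n + C - n λ` is nonnegative and `o(n)`.

Call `n` a steep drop of `w` at scale `(δ, T)` if `w (n - i) - w n > δ i` for some lag `i ≥ T`.
Jumping back from a steep drop `n` to `n - i` and using subadditivity across the gaps,
`δ · #{steep drops ≤ N} ≤ w 0 + (φ / T + β) N` whenever `w g ≤ φ + β g`; as `w = o(n)`, the steep
drops have density `< α` once `T` is large. With `δ_k = Γ 2⁻ᵏ`, density budget `α 2⁻ᵏ⁻¹` and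
scales `T_k`, the times that are not steep drops at any scale have lower density `≥ 1 - α`,
and `ε i = δ_k` for the largest `k` with `T_k ≤ i` works for them.
-/

open Set Function

lemma Subadditive.mul_le_of_tendsto_div {u : ℕ → ℝ} {L : ℝ} (hu : Subadditive u)
    (hlim : Tendsto (fun n => u n / n) atTop (𝓝 L)) (n : ℕ) : n * L ≤ u n := by
  rcases eq_or_ne n 0 with rfl | hn
  · simpa using hu 0 0
  have hbdd := hlim.bddBelow_range
  rw [← tendsto_nhds_unique (hu.tendsto_lim hbdd) hlim, ← le_div_iff₀' (by positivity)]
  exact hu.lim_le_div hbdd hn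

lemma exists_le_add_mul_of_tendsto_div {w : ℕ → ℝ} (hlim : Tendsto (fun n => w n / n) atTop (𝓝 0))
    {β : ℝ} (hβ : 0 < β) : ∃ φ, ∀ n : ℕ, w n ≤ φ + β * n := by
  have hev : ∀ᶠ n : ℕ in atTop, w n - β * n ≤ 0 := by
    filter_upwards [hlim.eventually (eventually_le_nhds hβ), eventually_gt_atTop 0] with n hn hn0
    rw [div_le_iff₀ (by exact_mod_cast hn0)] at hn
    linarith
  obtain ⟨φ, hφ⟩ := (isBoundedUnder_of_eventually_le hev).bddAbove_range
  exact ⟨φ, fun n => by linarith [hφ ⟨n, rfl⟩]⟩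

def IsSparse (S : Set ℕ) (α : ℝ) : Prop :=
  ∀ N : ℕ, ((S ∩ Iio N).ncard : ℝ) ≤ α * N

lemma IsSparse.union {S T : Set ℕ} {α β : ℝ} (hS : IsSparse S α) (hT : IsSparse T β) :
    IsSparse (S ∪ T) (α + β) := fun N => by
  calc (((S ∪ T) ∩ Iio N).ncard : ℝ) ≤ (S ∩ Iio N).ncard + (T ∩ Iio N).ncard := by
        rw [union_inter_distrib_right]; exact_mod_cast ncard_union_le _ _
    _ ≤ α * N + β * N := add_le_add (hS N) (hT N)
    _ = (α + β) * N := by ring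

lemma isSparse_iUnion_of_subset_Ici {B : ℕ → Set ℕ} {c : ℝ} (hc : 0 ≤ c)
    (hB : ∀ k, B k ⊆ Ici k) (hsparse : ∀ k, IsSparse (B k) (c * (1 / 2) ^ k)) :
    IsSparse (⋃ k, B k) (2 * c) := fun N => by
  have hsub : (⋃ k, B k) ∩ Iio N ⊆ ⋃ k ∈ Finset.range N, B k ∩ Iio N := by
    rintro n ⟨hn, hnN⟩
    obtain ⟨k, hk⟩ := mem_iUnion.1 hn
    exact mem_biUnion (Finset.mem_range.2 ((hB k hk).trans_lt hnN)) ⟨hk, hnN⟩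
  calc (((⋃ k, B k) ∩ Iio N).ncard : ℝ)
      ≤ ∑ k ∈ Finset.range N, ((B k ∩ Iio N).ncard : ℝ) := by
        exact_mod_cast (ncard_le_ncard hsub ((finite_Iio N).subset
          (iUnion₂_subset fun k _ => inter_subset_right))).trans (Finset.set_ncard_biUnion_le _ _)
    _ ≤ ∑ k ∈ Finset.range N, c * (1 / 2) ^ k * N := Finset.sum_le_sum fun k _ => hsparse k N
    _ = c * N * ∑ k ∈ Finset.range N, (1 / 2 : ℝ) ^ k := by rw [Finset.mul_sum]; ring_nf
    _ ≤ c * N * 2 := by gcongr; exact sum_geometric_two_le N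
    _ = 2 * c * N := by ring

lemma one_sub_le_upperDens {S : Set ℕ} {α : ℝ} (h : IsSparse Sᶜ α) : 1 - α ≤ upperDens S := by
  have hsplit (N : ℕ) : ((S ∩ Iio N).ncard : ℝ) + (Sᶜ ∩ Iio N).ncard = N := by
    rw [inter_comm S, inter_comm Sᶜ, ← sdiff_eq, ← Nat.cast_add,
      ncard_inter_add_ncard_sdiff_eq_ncard _ _ (finite_Iio N), ncard_Iio_nat]
  apply le_limsup_of_frequently_le
  · refine Eventually.frequently (eventually_atTop.2 ⟨1, fun N hN => ?_⟩)
    rw [le_div_iff₀ (by exact_mod_cast hN)]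
    linarith [hsplit N, h N]
  · refine isBoundedUnder_of_eventually_le (a := 1) (Eventually.of_forall fun N => ?_)
    exact div_le_one_of_le₀ (by linarith [hsplit N, (Sᶜ ∩ Iio N).ncard.cast_nonneg (α := ℝ)])
      N.cast_nonneg

def steepDropSet (w : ℕ → ℝ) (δ : ℝ) (T : ℕ) : Set ℕ :=
  {n | ∃ i, T ≤ i ∧ i ≤ n ∧ δ * i < w (n - i) - w n}

lemma steepDropSet_subset_Ici (w : ℕ → ℝ) (δ : ℝ) (T : ℕ) : steepDropSet w δ T ⊆ Ici T :=
  fun _ ⟨_, hTi, hin, _⟩ => hTi.trans hin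

section SteepDrops

variable {w : ℕ → ℝ} {δ φ β : ℝ} {T : ℕ}

lemma exists_mul_ncard_steepDropSet_add_le (hw : Subadditive w) (hφ : ∀ g : ℕ, w g ≤ φ + β * g)
    (hφ0 : 0 ≤ φ) (hβ : 0 ≤ β) (hδ : 0 ≤ δ) (hT : 0 < T) (N : ℕ) :
    ∃ e ≤ N, δ * (steepDropSet w δ T ∩ Iic N).ncard + w e ≤ w 0 + (φ / T + β) * e := by
  induction N using Nat.strong_induction_on with
  | _ N ih =>
  by_cases hN : N ∈ steepDropSet w δ T
  · obtain ⟨i, hTi, hiN, hdrop⟩ := hN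
    obtain ⟨e, heN, he⟩ := ih (N - i) (by omega)
    have hcard : ((steepDropSet w δ T ∩ Iic N).ncard : ℝ) ≤
        (steepDropSet w δ T ∩ Iic (N - i)).ncard + i := by
      have hsub : steepDropSet w δ T ∩ Iic N ⊆ (steepDropSet w δ T ∩ Iic (N - i)) ∪ Ioc (N - i) N :=
        fun n ⟨hn, hnN⟩ => (le_or_gt n (N - i)).imp (fun h => ⟨hn, h⟩) fun h => ⟨h, hnN⟩
      have := (ncard_le_ncard hsub (((finite_Iic _).inter_of_right _).union (finite_Ioc _ _))).trans
        (ncard_union_le _ _)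
      rw [ncard_Ioc_nat, Nat.sub_sub_self hiN] at this
      exact_mod_cast this
    have hwe : w (N - i) ≤ w e + φ + β * ((N - i : ℕ) - e) := by
      have := hφ (N - i - e)
      rw [Nat.cast_sub (by omega)] at this
      linarith [Nat.add_sub_cancel' (show e ≤ N - i by omega) ▸ hw e (N - i - e)]
    refine ⟨N, le_rfl, ?_⟩
    have hTe : (e : ℝ) + T ≤ N := by exact_mod_cast (show e + T ≤ N by omega)
    have hφT : φ / T * (e + T) ≤ φ / T * N := by gcongr
    rw [mul_add, div_mul_cancel₀ φ (by positivity)] at hφT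
    push_cast [Nat.cast_sub hiN] at hwe ⊢
    nlinarith [mul_le_mul_of_nonneg_left hcard hδ]
  · rcases N with _ | N
    · refine ⟨0, le_rfl, ?_⟩
      have hempty : steepDropSet w δ T ∩ Iic 0 = ∅ := eq_empty_of_forall_notMem
        fun n ⟨hn, hn0⟩ => by have := steepDropSet_subset_Ici w δ T hn; simp_all
      simp [hempty]
    · obtain ⟨e, heN, he⟩ := ih N N.lt_succ_self
      refine ⟨e, heN.trans N.le_succ, le_trans ?_ he⟩
      have hsub : steepDropSet w δ T ∩ Iic (N + 1) ⊆ steepDropSet w δ T ∩ Iic N :=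
        fun n ⟨hn, hnN⟩ =>
          ⟨hn, Nat.le_of_lt_succ <| lt_of_le_of_ne hnN (by rintro rfl; exact hN hn)⟩
      gcongr
      exact (finite_Iic N).inter_of_right _

lemma eventually_isSparse_steepDropSet (hw0 : ∀ n, 0 ≤ w n) (hw : Subadditive w)
    (hlim : Tendsto (fun n => w n / n) atTop (𝓝 0)) (hδ : 0 < δ) {α : ℝ} (hα : 0 < α) :
    ∀ᶠ T in atTop, IsSparse (steepDropSet w δ T) α := by
  set β := α * δ / 2
  have hβ : 0 < β := by positivity
  obtain ⟨φ, hφ⟩ := exists_le_add_mul_of_tendsto_div hlim hβ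
  have hφ0 : 0 ≤ φ := by simpa using (hw0 0).trans (hφ 0)
  filter_upwards [(tendsto_const_div_atTop_nhds_zero_nat (2 * φ)).eventually
    (eventually_le_nhds hβ), eventually_gt_atTop 0] with T hTφ hT N
  rcases lt_or_ge N T with hNT | hTN
  · have hempty : steepDropSet w δ T ∩ Iio N = ∅ := eq_empty_of_forall_notMem
      fun n ⟨hn, hnN⟩ => by have := steepDropSet_subset_Ici w δ T hn; simp_all; omega
    simp only [hempty, ncard_empty, Nat.cast_zero]
    positivity
  · obtain ⟨e, heN, he⟩ := exists_mul_ncard_steepDropSet_add_le hw hφ hφ0 hβ.le hδ.le hT N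
    have hTpos : (0 : ℝ) < T := by exact_mod_cast hT
    have hφN : φ ≤ φ / T * N := by
      rw [div_mul_eq_mul_div, le_div_iff₀ hTpos]; gcongr
    refine le_of_mul_le_mul_left ?_ hδ
    calc δ * (steepDropSet w δ T ∩ Iio N).ncard
        ≤ δ * (steepDropSet w δ T ∩ Iic N).ncard := by
          gcongr
          exacts [(finite_Iic N).inter_of_right _, Iio_subset_Iic_self]
      _ ≤ φ + (φ / T + β) * N := by
        have hwφ : w 0 ≤ φ := by simpa using hφ 0
        have heN' : (φ / T + β) * e ≤ (φ / T + β) * N := by gcongr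
        linarith [hw0 e]
      _ ≤ 2 * φ / T * N + β * N := by rw [mul_div_assoc]; nlinarith
      _ ≤ β * N + β * N := by gcongr
      _ = δ * (α * N) := by ring

lemma exists_isSparse_compl_forall_sub_le (hw0 : ∀ n, 0 ≤ w n) (hw : Subadditive w)
    (hlim : Tendsto (fun n => w n / n) atTop (𝓝 0)) {Γ : ℝ} (hΓ : 0 < Γ)
    (hΓw : ∀ n i, i ≤ n → w (n - i) - w n ≤ Γ * i) {α : ℝ} (hα : 0 < α) :
    ∃ ε : ℕ → ℝ, (∀ i, 0 ≤ ε i) ∧ Tendsto ε atTop (𝓝 0) ∧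
      ∃ S : Set ℕ, IsSparse Sᶜ α ∧ ∀ n ∈ S, ∀ i ≤ n, w (n - i) - w n ≤ ε i * i := by
  have hT (k : ℕ) : ∃ T, k ≤ T ∧
      IsSparse (steepDropSet w (Γ * (1 / 2) ^ k) T) (α / 2 * (1 / 2) ^ k) :=
    ((eventually_ge_atTop k).and
      (eventually_isSparse_steepDropSet hw0 hw hlim (by positivity) (by positivity))).exists
  choose T hkT hTsparse using hT
  set κ : ℕ → ℕ := fun i => Nat.findGreatest (fun k => T k ≤ i) i
  have hκ : Tendsto κ atTop atTop := tendsto_atTop.2 fun K => eventually_atTop.2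
    ⟨max (T K) K, fun i hi => Nat.le_findGreatest (le_of_max_le_right hi) (le_of_max_le_left hi)⟩
  refine ⟨fun i => Γ * (1 / 2) ^ κ i, fun i => by positivity, ?_,
    (⋃ k, steepDropSet w (Γ * (1 / 2) ^ k) (T k))ᶜ, ?_, fun n hn i hi => ?_⟩
  · simpa using ((tendsto_pow_atTop_nhds_zero_of_lt_one (by norm_num)
      (by norm_num : (1 / 2 : ℝ) < 1)).comp hκ).const_mul Γ
  · rw [compl_compl]
    simpa [mul_div_cancel₀] using isSparse_iUnion_of_subset_Ici (c := α / 2) (by positivity)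
      (fun k => (steepDropSet_subset_Ici _ _ _).trans (Ici_subset_Ici.2 (hkT k))) hTsparse
  · rcases eq_or_ne (κ i) 0 with h0 | h0
    · simpa [h0] using hΓw n i hi
    · have hTκ : T (κ i) ≤ i := Nat.findGreatest_of_ne_zero (P := fun k => T k ≤ i) rfl h0
      by_contra hlt
      exact hn (mem_iUnion.2 ⟨κ i, i, hTκ, hi, not_le.1 hlt⟩)

end SteepDrops

theorem Subadditive.exists_isSparse_compl_forall_le {u : ℕ → ℝ} {L Γ : ℝ} (hu : Subadditive u)
    (hlim : Tendsto (fun n => u n / n) atTop (𝓝 L)) (hΓ : ∀ m i, u m ≤ u (m + i) + Γ * i)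
    {α : ℝ} (hα : 0 < α) :
    ∃ ε : ℕ → ℝ, (∀ i, 0 ≤ ε i) ∧ Tendsto ε atTop (𝓝 0) ∧
      ∃ S : Set ℕ, IsSparse Sᶜ α ∧ ∀ n ∈ S, ∀ i ≤ n, u (n - i) ≤ u n + (-L + ε i) * i := by
  set w : ℕ → ℝ := fun n => u n - n * L
  have hw0 (n : ℕ) : 0 ≤ w n := sub_nonneg.2 (hu.mul_le_of_tendsto_div hlim n)
  have hw : Subadditive w := fun m n => by simp only [w]; push_cast; linarith [hu m n]
  have hwlim : Tendsto (fun n => w n / n) atTop (𝓝 0) := by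
    have hsub := hlim.sub_const L
    rw [sub_self] at hsub
    refine hsub.congr' ?_
    filter_upwards [eventually_ne_atTop 0] with n hn
    simp only [w]
    field_simp
  have hwΓ (n i : ℕ) (hi : i ≤ n) : w (n - i) - w n ≤ max (Γ + L) 1 * i := by
    have := hΓ (n - i) i
    rw [Nat.sub_add_cancel hi] at this
    simp only [w]
    push_cast [Nat.cast_sub hi]
    nlinarith [le_max_left (Γ + L) 1, i.cast_nonneg (α := ℝ)]
  obtain ⟨ε, hε0, hε, S, hS, hSw⟩ := exists_isSparse_compl_forall_sub_le hw0 hw hwlim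
    (one_pos.trans_le (le_max_right _ _)) hwΓ hα
  refine ⟨ε, hε0, hε, S, hS, fun n hn i hi => ?_⟩
  have := hSw n hn i hi
  simp only [w] at this
  push_cast [Nat.cast_sub hi] at this
  linarith

lemma log_norm_mul_le (g h : X ≃L[ℝ] X) :
    Real.log ‖((g * h : X ≃L[ℝ] X) : X →L[ℝ] X)‖ ≤
      Real.log ‖(g : X →L[ℝ] X)‖ + Real.log ‖(h : X →L[ℝ] X)‖ := by
  rcases subsingleton_or_nontrivial X with hX | hX
  · simp [Subsingleton.elim _ (0 : X →L[ℝ] X)]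
  · rw [← Real.log_mul g.norm_pos.ne' h.norm_pos.ne']
    have hcomp : ((g * h : X ≃L[ℝ] X) : X →L[ℝ] X) = (g : X →L[ℝ] X).comp (h : X →L[ℝ] X) := by
      ext; rfl
    exact Real.log_le_log (g * h).norm_pos (hcomp ▸ (g : X →L[ℝ] X).opNorm_comp_le (h : X →L[ℝ] X))

lemma log_norm_one : Real.log ‖((1 : X ≃L[ℝ] X) : X →L[ℝ] X)‖ = 0 := by
  rcases subsingleton_or_nontrivial X with hX | hX
  · simp [Subsingleton.elim _ (0 : X →L[ℝ] X)]
  · simp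

lemma norm_le_mul_exp_of_log_le {g h : X ≃L[ℝ] X} {c : ℝ}
    (H : Real.log ‖(g : X →L[ℝ] X)‖ ≤ Real.log ‖(h : X →L[ℝ] X)‖ + c) :
    ‖(g : X →L[ℝ] X)‖ ≤ ‖(h : X →L[ℝ] X)‖ * Real.exp c := by
  rcases subsingleton_or_nontrivial X with hX | hX
  · simp [Subsingleton.elim _ (0 : X →L[ℝ] X)]
  · rw [← Real.exp_log g.norm_pos, ← Real.exp_log h.norm_pos, ← Real.exp_add]
    exact Real.exp_le_exp.2 H

lemma coc_succ' (f : M → M) (A : M → (X ≃L[ℝ] X)) (n : ℕ) (x : M) :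
    coc f A (n + 1) x = A (f^[n] x) * coc f A n x := by
  induction n generalizing x with
  | zero => simp [coc]
  | succ n ih =>
    rw [coc, ih (f x), ← iterate_succ_apply, coc, mul_assoc]

lemma coc_add (f : M → M) (A : M → (X ≃L[ℝ] X)) (m n : ℕ) (x : M) :
    coc f A (m + n) x = coc f A n (f^[m] x) * coc f A m x := by
  induction n with
  | zero => simp [coc]
  | succ n ih =>
    rw [← add_assoc, coc_succ', ih, coc_succ', ← iterate_add_apply, add_comm n m, mul_assoc]

lemma Function.IsPeriodicPt.exists_forall_iterate_le {f : M → M} {p : M} {J : ℕ}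
    (hp : IsPeriodicPt f J p) (hJ : 0 < J) (g : M → ℝ) :
    ∃ Λ, 0 ≤ Λ ∧ ∀ j, g (f^[j] p) ≤ Λ := by
  refine ⟨∑ k ∈ Finset.range J, |g (f^[k] p)|, by positivity, fun j => ?_⟩
  rw [← hp.iterate_mod_apply j]
  exact (le_abs_self _).trans <| Finset.single_le_sum (fun k _ => abs_nonneg (g (f^[k] p)))
    (Finset.mem_range.2 (Nat.mod_lt j hJ))

section SubadditiveWeight

variable {ℓ : (X ≃L[ℝ] X) → ℝ} {f : M → M} {A : M → (X ≃L[ℝ] X)} {Λ : ℝ}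

lemma apply_coc_le_of_forall_iterate_le (hℓ : ∀ g h, ℓ (g * h) ≤ ℓ g + ℓ h) (hℓ1 : ℓ 1 = 0)
    {x : M} (hA : ∀ j, ℓ (A (f^[j] x)) ≤ Λ) (n : ℕ) : ℓ (coc f A n x) ≤ n * Λ := by
  induction n generalizing x with
  | zero => simp [coc, hℓ1]
  | succ n ih =>
    calc ℓ (coc f A (n + 1) x) ≤ ℓ (coc f A n (f x)) + ℓ (A x) := hℓ _ _
      _ ≤ n * Λ + Λ := add_le_add (ih fun j => iterate_succ_apply f j x ▸ hA (j + 1)) (hA 0)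
      _ = (n + 1 : ℕ) * Λ := by push_cast; ring

lemma apply_coc_inv_le_of_forall_iterate_le (hℓ : ∀ g h, ℓ (g * h) ≤ ℓ g + ℓ h) (hℓ1 : ℓ 1 = 0)
    {x : M} (hA : ∀ j, ℓ (A (f^[j] x))⁻¹ ≤ Λ) (n : ℕ) : ℓ (coc f A n x)⁻¹ ≤ n * Λ :=
  apply_coc_le_of_forall_iterate_le (ℓ := fun g => ℓ g⁻¹)
    (fun g h => by simpa only [mul_inv_rev, add_comm] using hℓ h⁻¹ g⁻¹) (by simpa using hℓ1) hA n

variable {p : M}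

lemma apply_coc_le_apply_coc_add (hℓ : ∀ g h, ℓ (g * h) ≤ ℓ g + ℓ h) (hℓ1 : ℓ 1 = 0)
    (hA' : ∀ j, ℓ (A (f^[j] p))⁻¹ ≤ Λ) (m i : ℕ) :
    ℓ (coc f A m p) ≤ ℓ (coc f A (m + i) p) + Λ * i := by
  have hcoc : coc f A m p = (coc f A i (f^[m] p))⁻¹ * coc f A (m + i) p :=
    eq_inv_mul_of_mul_eq (coc_add f A m i p).symm
  rw [hcoc]
  linarith [hℓ (coc f A i (f^[m] p))⁻¹ (coc f A (m + i) p), apply_coc_inv_le_of_forall_iterate_le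
    hℓ hℓ1 (fun j => iterate_add_apply f j m p ▸ hA' (j + m)) i]

lemma apply_coc_iterate_le_of_isPeriodicPt (hℓ : ∀ g h, ℓ (g * h) ≤ ℓ g + ℓ h) (hℓ1 : ℓ 1 = 0)
    (hA : ∀ j, ℓ (A (f^[j] p)) ≤ Λ) (hA' : ∀ j, ℓ (A (f^[j] p))⁻¹ ≤ Λ) (hΛ : 0 ≤ Λ)
    {J : ℕ} (hp : IsPeriodicPt f J p) (hJ : 0 < J) (t n : ℕ) :
    ℓ (coc f A n (f^[t] p)) ≤ ℓ (coc f A n p) + 2 * J * Λ := by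
  set s := t % J
  have hsJ : (s : ℝ) ≤ J := by exact_mod_cast (Nat.mod_lt t hJ).le
  have hcoc : coc f A n (f^[s] p) = coc f A s (f^[n] p) * coc f A n p * (coc f A s p)⁻¹ :=
    eq_mul_inv_of_mul_eq <| by rw [← coc_add, ← coc_add, add_comm]
  rw [← hp.iterate_mod_apply, hcoc]
  calc ℓ (coc f A s (f^[n] p) * coc f A n p * (coc f A s p)⁻¹)
      ≤ s * Λ + ℓ (coc f A n p) + s * Λ := by
        linarith [hℓ (coc f A s (f^[n] p) * coc f A n p) (coc f A s p)⁻¹,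
          hℓ (coc f A s (f^[n] p)) (coc f A n p),
          apply_coc_le_of_forall_iterate_le hℓ hℓ1
            (fun j => iterate_add_apply f j n p ▸ hA (j + n)) s,
          apply_coc_inv_le_of_forall_iterate_le hℓ hℓ1 hA' s]
    _ ≤ ℓ (coc f A n p) + 2 * J * Λ := by nlinarith

lemma subadditive_apply_coc_add_const (hℓ : ∀ g h, ℓ (g * h) ≤ ℓ g + ℓ h) (hℓ1 : ℓ 1 = 0)
    (hA : ∀ j, ℓ (A (f^[j] p)) ≤ Λ) (hA' : ∀ j, ℓ (A (f^[j] p))⁻¹ ≤ Λ) (hΛ : 0 ≤ Λ)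
    {J : ℕ} (hp : IsPeriodicPt f J p) (hJ : 0 < J) :
    Subadditive fun n => ℓ (coc f A n p) + 2 * J * Λ := fun m n => by
  dsimp only
  rw [coc_add]
  linarith [hℓ (coc f A n (f^[m] p)) (coc f A m p),
    apply_coc_iterate_le_of_isPeriodicPt hℓ hℓ1 hA hA' hΛ hp hJ m n,
    mul_nonneg (mul_nonneg zero_le_two J.cast_nonneg) hΛ]

end SubadditiveWeight

theorem exists_isSparse_compl_cocycle_le {ℓ : (X ≃L[ℝ] X) → ℝ}
    (hℓ : ∀ g h, ℓ (g * h) ≤ ℓ g + ℓ h) (hℓ1 : ℓ 1 = 0) {f : M → M} {A : M → (X ≃L[ℝ] X)}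
    {p : M} {J : ℕ} (hp : IsPeriodicPt f J p) (hJ : 0 < J) {L : ℝ}
    (hL : Tendsto (fun n : ℕ => (n : ℝ)⁻¹ * ℓ (coc f A n p)) atTop (𝓝 L)) {α : ℝ} (hα : 0 < α) :
    ∃ ε : ℕ → ℝ, (∀ i, 0 ≤ ε i) ∧ Tendsto ε atTop (𝓝 0) ∧ ∃ S : Set ℕ, IsSparse Sᶜ α ∧
      ∀ n ∈ S, ∀ i ≤ n, ℓ (coc f A (n - i) (f^[i] p)) ≤ ℓ (coc f A n p) + (-L + ε i) * i := by
  obtain ⟨Λ, hΛ, hAΛ⟩ := hp.exists_forall_iterate_le hJ fun x => max (ℓ (A x)) (ℓ (A x)⁻¹)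
  have hA (j : ℕ) : ℓ (A (f^[j] p)) ≤ Λ := (le_max_left _ _).trans (hAΛ j)
  have hA' (j : ℕ) : ℓ (A (f^[j] p))⁻¹ ≤ Λ := (le_max_right _ _).trans (hAΛ j)
  set C : ℝ := 2 * J * Λ
  have hlim : Tendsto (fun n : ℕ => (ℓ (coc f A n p) + C) / n) atTop (𝓝 L) := by
    have := hL.add (tendsto_const_div_atTop_nhds_zero_nat C)
    rw [add_zero] at this
    exact this.congr fun n => by rw [add_div, inv_mul_eq_div]
  obtain ⟨ε, hε0, hε, S, hS, hSle⟩ :=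
    (subadditive_apply_coc_add_const hℓ hℓ1 hA hA' hΛ hp hJ).exists_isSparse_compl_forall_le
      hlim (fun m i => by linarith [apply_coc_le_apply_coc_add hℓ hℓ1 hA' m i]) hα
  refine ⟨fun i => ε i + C / i, fun i => add_nonneg (hε0 i) (by positivity),
    by simpa using hε.add (tendsto_const_div_atTop_nhds_zero_nat C), S, hS, fun n hn i hi => ?_⟩
  rcases eq_or_ne i 0 with rfl | hi0
  · simp
  · have hCi : C / i * i = C := div_mul_cancel₀ C (by exact_mod_cast hi0)
    have hexpand : (-L + (ε i + C / i)) * i = (-L + ε i) * i + C / i * i := by ring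
    linarith [hSle n hn i hi, apply_coc_iterate_le_of_isPeriodicPt hℓ hℓ1 hA hA' hΛ hp hJ i (n - i)]

theorem stmt10_general {M : Type*}
    {X : Type*} [NormedAddCommGroup X] [NormedSpace ℝ X]
    (f : M → M) (A : M → (X ≃L[ℝ] X))
    (p : M) (J : ℕ) (hJ : 0 < J) (hp : f^[J] p = p)
    (lamP lamM : ℝ)
    (hlamP : Tendsto (fun n : ℕ =>
      (n : ℝ)⁻¹ * Real.log ‖(coc f A n p : X →L[ℝ] X)‖) atTop (𝓝 lamP))
    (hlamM : Tendsto (fun n : ℕ =>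
      (n : ℝ)⁻¹ * Real.log ‖(((coc f A n p)⁻¹ : X ≃L[ℝ] X) : X →L[ℝ] X)‖) atTop (𝓝 (-lamM)))
    (ρ : ℝ) (hρ : 0 < ρ) :
    ∃ ε : ℕ → ℝ, (∀ i, 0 ≤ ε i) ∧ Tendsto ε atTop (𝓝 0) ∧
      ∃ Sp : Set ℕ, 1 - ρ < upperDens Sp ∧
        ∀ n ∈ Sp, ∀ i ≤ n,
          ‖(coc f A (n - i) (f^[i] p) : X →L[ℝ] X)‖ ≤
            ‖(coc f A n p : X →L[ℝ] X)‖ * Real.exp ((-lamP + ε i) * (i : ℝ)) ∧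
          ‖(((coc f A (n - i) (f^[i] p))⁻¹ : X ≃L[ℝ] X) : X →L[ℝ] X)‖ ≤
            ‖(((coc f A n p)⁻¹ : X ≃L[ℝ] X) : X →L[ℝ] X)‖ * Real.exp ((lamM + ε i) * (i : ℝ)) := by
  obtain ⟨ε₁, hε₁0, hε₁, S₁, hS₁, hS₁le⟩ :=
    exists_isSparse_compl_cocycle_le (ℓ := fun g : X ≃L[ℝ] X => Real.log ‖(g : X →L[ℝ] X)‖)
      log_norm_mul_le log_norm_one hp hJ hlamP (by positivity : 0 < ρ / 4)
  obtain ⟨ε₂, hε₂0, hε₂, S₂, hS₂, hS₂le⟩ :=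
    exists_isSparse_compl_cocycle_le
      (ℓ := fun g : X ≃L[ℝ] X => Real.log ‖((g⁻¹ : X ≃L[ℝ] X) : X →L[ℝ] X)‖)
      (fun g h => by simpa only [mul_inv_rev, add_comm] using log_norm_mul_le h⁻¹ g⁻¹)
      (by simpa using log_norm_one) hp hJ hlamM (by positivity : 0 < ρ / 4)
  refine ⟨fun i => ε₁ i + ε₂ i, fun i => add_nonneg (hε₁0 i) (hε₂0 i),
    by simpa using hε₁.add hε₂, S₁ ∩ S₂, ?_, fun n hn i hi =>
      ⟨norm_le_mul_exp_of_log_le ?_, norm_le_mul_exp_of_log_le ?_⟩⟩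
  · have := one_sub_le_upperDens (S := S₁ ∩ S₂) (by rw [compl_inter]; exact hS₁.union hS₂)
    linarith
  · refine (hS₁le n hn.1 i hi).trans ?_
    gcongr
    linarith [hε₂0 i]
  · refine (hS₂le n hn.2 i hi).trans ?_
    rw [neg_neg]
    gcongr
    linarith [hε₁0 i]

/-- **Corollary 4.9.** Along a set of times of upper density `> 1 − ρ`, the
norms of the cocycle along the periodic orbit of `p` satisfy the Gouëzel–Karlsson
subadditivity estimates. -/
theorem stmt10 {M : Type*} [MetricSpace M] [CompactSpace M]
    {X : Type*} [NormedAddCommGroup X] [NormedSpace ℝ X] [CompleteSpace X]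
    (f : M → M) (A : M → (X ≃L[ℝ] X))
    (p : M) (J : ℕ) (hJ : 0 < J) (hp : f^[J] p = p)
    (lamP lamM : ℝ)
    (hlamP : Tendsto (fun n : ℕ =>
      (n : ℝ)⁻¹ * Real.log ‖(coc f A n p : X →L[ℝ] X)‖) atTop (𝓝 lamP))
    (hlamM : Tendsto (fun n : ℕ =>
      (n : ℝ)⁻¹ * Real.log ‖(((coc f A n p)⁻¹ : X ≃L[ℝ] X) : X →L[ℝ] X)‖) atTop (𝓝 (-lamM)))
    (ρ : ℝ) (hρ : 0 < ρ) :
    ∃ ε : ℕ → ℝ, (∀ i, 0 ≤ ε i) ∧ Tendsto ε atTop (𝓝 0) ∧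
      ∃ Sp : Set ℕ, 1 - ρ < upperDens Sp ∧
        ∀ n ∈ Sp, ∀ i ≤ n,
          ‖(coc f A (n - i) (f^[i] p) : X →L[ℝ] X)‖ ≤
            ‖(coc f A n p : X →L[ℝ] X)‖ * Real.exp ((-lamP + ε i) * (i : ℝ)) ∧
          ‖(((coc f A (n - i) (f^[i] p))⁻¹ : X ≃L[ℝ] X) : X →L[ℝ] X)‖ ≤
            ‖(((coc f A n p)⁻¹ : X ≃L[ℝ] X) : X →L[ℝ] X)‖ * Real.exp ((lamM + ε i) * (i : ℝ)) :=
  stmt10_general f A p J hJ hp lamP lamM hlamP hlamM ρ hρ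
end
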